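/- arXiv:2303.16454 — 3 statements merged into one kernel-verified Lean document; each statement's English description precedes it below -/
import Mathlib

section
/- Let θ and θ̃ be two tanh neural network parameters of depth L ≥ 1 with the same layer dimensions (d, d_1, …, d_{L−1}, 1) and width W, satisfying ‖θ‖_{ℓ∞} ≤ R and ‖θ̃‖_{ℓ∞} ≤ R for some R ≥ 1. Then their realizations v_θ, v_{θ̃} : ℝ^d → ℝ satisfy |v_θ(x) − v_{θ̃}(x)| ≤ 2 L R^{L−1} W^L ‖θ − θ̃‖_{ℓ∞} for every x ∈ ℝ^d with ‖x‖_{ℓ∞} ≤ 1. -/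
noncomputable def nnHidden (dims : ℕ → ℕ)
    (A : ∀ ℓ : ℕ, Matrix (Fin (dims (ℓ + 1))) (Fin (dims ℓ)) ℝ)
    (b : ∀ ℓ : ℕ, Fin (dims (ℓ + 1)) → ℝ)
    (x : Fin (dims 0) → ℝ) : (ℓ : ℕ) → Fin (dims ℓ) → ℝ
  | 0 => x
  | ℓ + 1 => fun i => Real.tanh ((∑ j, A ℓ i j * nnHidden dims A b x ℓ j) + b ℓ i)

noncomputable def nnRealize (dims : ℕ → ℕ) (L : ℕ)
    (A : ∀ ℓ : ℕ, Matrix (Fin (dims (ℓ + 1))) (Fin (dims ℓ)) ℝ)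
    (b : ∀ ℓ : ℕ, Fin (dims (ℓ + 1)) → ℝ)
    (x : Fin (dims 0) → ℝ) : Fin (dims L) → ℝ :=
  match L with
  | 0 => x
  | m + 1 => fun i => (∑ j, A m i j * nnHidden dims A b x m j) + b m i

lemma abs_tanh_le_one (x : ℝ) : |Real.tanh x| ≤ 1 := by
  rw [Real.tanh_eq_sinh_div_cosh, abs_div, abs_of_pos (Real.cosh_pos x),
    div_le_one (Real.cosh_pos x)]
  have h := Real.cosh_sq x
  nlinarith [abs_nonneg (Real.sinh x), sq_abs (Real.sinh x), Real.cosh_pos x]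

lemma hasDerivAt_tanh (x : ℝ) : HasDerivAt Real.tanh (1 / Real.cosh x ^ 2) x := by
  have h : HasDerivAt (fun y => Real.sinh y / Real.cosh y)
      ((Real.cosh x * Real.cosh x - Real.sinh x * Real.sinh x) / Real.cosh x ^ 2) x :=
    (Real.hasDerivAt_sinh x).div (Real.hasDerivAt_cosh x) (Real.cosh_pos x).ne'
  have e : (Real.cosh x * Real.cosh x - Real.sinh x * Real.sinh x) = 1 := by
    have := Real.cosh_sq_sub_sinh_sq x; nlinarith
  rw [e] at h
  exact h.congr_of_eventuallyEq (by filter_upwards with y using (Real.tanh_eq_sinh_div_cosh y))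

lemma tanh_lip (a c : ℝ) : |Real.tanh a - Real.tanh c| ≤ |a - c| := by
  have := Convex.norm_image_sub_le_of_norm_hasDerivWithin_le (f := Real.tanh)
    (f' := fun y => 1 / Real.cosh y ^ 2) (s := Set.univ)
    (fun y _ => (hasDerivAt_tanh y).hasDerivWithinAt) (C := 1) ?_ convex_univ
    (Set.mem_univ c) (Set.mem_univ a)
  · simpa using this
  · intro y _
    have h1 : (1:ℝ) ≤ Real.cosh y := Real.one_le_cosh y
    rw [Real.norm_eq_abs, abs_of_nonneg (by positivity)]
    rw [div_le_one (by positivity)]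
    nlinarith

lemma affine_diff {n : ℕ} (a a' v v' : Fin n → ℝ) (c c' R ε δ : ℝ)
    (hR : 0 ≤ R) (hδ : 0 ≤ δ)
    (ha' : ∀ j, |a' j| ≤ R) (hv : ∀ j, |v j| ≤ 1)
    (hda : ∀ j, |a j - a' j| ≤ ε) (hdv : ∀ j, |v j - v' j| ≤ δ) (hc : |c - c'| ≤ ε) :
    |((∑ j, a j * v j) + c) - ((∑ j, a' j * v' j) + c')| ≤ n * ε + n * (R * δ) + ε := by
  have key : ∀ j, |a j * v j - a' j * v' j| ≤ ε + R * δ := by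
    intro j
    have e : a j * v j - a' j * v' j = (a j - a' j) * v j + a' j * (v j - v' j) := by ring
    rw [e]
    refine (abs_add_le _ _).trans (add_le_add ?_ ?_)
    · rw [abs_mul]
      calc |a j - a' j| * |v j| ≤ ε * 1 := by
            exact mul_le_mul (hda j) (hv j) (abs_nonneg _) ((abs_nonneg _).trans (hda j))
        _ = ε := mul_one ε
    · rw [abs_mul]
      exact mul_le_mul (ha' j) (hdv j) (abs_nonneg _) hR
  have hsum : |∑ j, a j * v j - ∑ j, a' j * v' j| ≤ n * (ε + R * δ) := by
    rw [← Finset.sum_sub_distrib]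
    refine (Finset.abs_sum_le_sum_abs _ _).trans ?_
    calc ∑ j, |a j * v j - a' j * v' j| ≤ ∑ _j : Fin n, (ε + R * δ) :=
          Finset.sum_le_sum fun j _ => key j
      _ = n * (ε + R * δ) := by simp [Finset.sum_const]; ring
  calc |((∑ j, a j * v j) + c) - ((∑ j, a' j * v' j) + c')|
      = |((∑ j, a j * v j) - ∑ j, a' j * v' j) + (c - c')| := by ring_nf
    _ ≤ |(∑ j, a j * v j) - ∑ j, a' j * v' j| + |c - c'| := abs_add_le _ _
    _ ≤ n * (ε + R * δ) + ε := add_le_add hsum hc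
    _ = n * ε + n * (R * δ) + ε := by ring

lemma arith_step (m d W : ℕ) (R ε : ℝ) (hR : 1 ≤ R) (hε : 0 ≤ ε) (hW : 1 ≤ W) (hd : d ≤ W) :
    (d:ℝ) * ε + (d:ℝ) * (R * (2 * (m:ℝ) * R ^ (m - 1) * (W:ℝ) ^ m * ε)) + ε ≤
      2 * ((m:ℝ) + 1) * R ^ m * (W:ℝ) ^ (m + 1) * ε := by
  have hWr : (1:ℝ) ≤ (W:ℝ) := by exact_mod_cast hW
  have hdr : (d:ℝ) ≤ (W:ℝ) := by exact_mod_cast hd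
  have hdr0 : (0:ℝ) ≤ (d:ℝ) := Nat.cast_nonneg d
  cases m with
  | zero =>
    norm_num
    nlinarith [mul_le_mul_of_nonneg_right hdr hε, mul_le_mul_of_nonneg_right hWr hε]
  | succ k =>
    have hRp : (1:ℝ) ≤ R ^ (k + 1) := one_le_pow₀ hR
    have hWp : (1:ℝ) ≤ (W:ℝ) ^ (k + 1) := one_le_pow₀ hWr
    have hRp0 : (0:ℝ) ≤ R ^ (k + 1) := by positivity
    have hWp0 : (0:ℝ) ≤ (W:ℝ) ^ (k + 1) := by positivity
    have e1 : (k + 1 : ℕ) - 1 = k := rfl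
    rw [e1]
    push_cast
    have h1 : (d:ℝ) * ε + ε ≤ 2 * R ^ (k+1) * (W:ℝ) ^ (k+2) * ε := by
      have : (d:ℝ) + 1 ≤ 2 * (R ^ (k+1) * (W:ℝ) ^ (k+2)) := by
        have hW2 : (W:ℝ) ≤ (W:ℝ) ^ (k+2) := by
          calc (W:ℝ) = (W:ℝ) * 1 := (mul_one _).symm
            _ ≤ (W:ℝ) ^ (k+1) * (W:ℝ) := by
                nlinarith
            _ = (W:ℝ) ^ (k+2) := by ring
        nlinarith
      nlinarith
    have h2 : (d:ℝ) * (R * (2 * ((k:ℝ)+1) * R ^ k * (W:ℝ) ^ (k+1) * ε)) ≤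
        2 * ((k:ℝ)+1) * R ^ (k+1) * (W:ℝ) ^ (k+2) * ε := by
      have e2 : (d:ℝ) * (R * (2 * ((k:ℝ)+1) * R ^ k * (W:ℝ) ^ (k+1) * ε)) =
          2 * ((k:ℝ)+1) * R ^ (k+1) * ((d:ℝ) * (W:ℝ) ^ (k+1)) * ε := by ring
      have e3 : 2 * ((k:ℝ)+1) * R ^ (k+1) * (W:ℝ) ^ (k+2) * ε =
          2 * ((k:ℝ)+1) * R ^ (k+1) * ((W:ℝ) * (W:ℝ) ^ (k+1)) * ε := by ring
      rw [e2, e3]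
      have hk0 : (0:ℝ) ≤ (k:ℝ) + 1 := by positivity
      have h4 : (d:ℝ) * (W:ℝ) ^ (k+1) ≤ (W:ℝ) * (W:ℝ) ^ (k+1) :=
        mul_le_mul_of_nonneg_right hdr hWp0
      exact mul_le_mul_of_nonneg_right
        (mul_le_mul_of_nonneg_left h4 (mul_nonneg (by positivity) hRp0)) hε
    nlinarith [h1, h2]

/-- Two scalar-output tanh neural networks with the same architecture of depth
`L ≥ 1` and width `W`, with weights bounded by `R ≥ 1`, differ by at most
`2 L R^(L-1) W^L ‖θ - θ̃‖_{ℓ∞}` on the unit `ℓ∞` ball. -/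
theorem tanh_network_lipschitz_in_parameters (dims : ℕ → ℕ) (L : ℕ) (hL : 1 ≤ L)
    (hout : dims L = 1)
    (A A' : ∀ ℓ : ℕ, Matrix (Fin (dims (ℓ + 1))) (Fin (dims ℓ)) ℝ)
    (b b' : ∀ ℓ : ℕ, Fin (dims (ℓ + 1)) → ℝ)
    (W : ℕ) (hW : ∀ ℓ ≤ L, dims ℓ ≤ W)
    (R : ℝ) (hR : 1 ≤ R)
    (hA : ∀ ℓ < L, ∀ i j, |A ℓ i j| ≤ R)
    (hb : ∀ ℓ < L, ∀ i, |b ℓ i| ≤ R)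
    (hA' : ∀ ℓ < L, ∀ i j, |A' ℓ i j| ≤ R)
    (hb' : ∀ ℓ < L, ∀ i, |b' ℓ i| ≤ R)
    (ε : ℝ) (hε : 0 ≤ ε)
    (hdA : ∀ ℓ < L, ∀ i j, |A ℓ i j - A' ℓ i j| ≤ ε)
    (hdb : ∀ ℓ < L, ∀ i, |b ℓ i - b' ℓ i| ≤ ε)
    (x : Fin (dims 0) → ℝ) (hx : ∀ j, |x j| ≤ 1) (i : Fin (dims L)) :
    |nnRealize dims L A b x i - nnRealize dims L A' b' x i| ≤
      2 * (L : ℝ) * R ^ (L - 1) * (W : ℝ) ^ L * ε := by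
  have hR0 : (0:ℝ) ≤ R := zero_le_one.trans hR
  have hW1 : 1 ≤ W := by have := hW L le_rfl; omega
  have hv : ∀ ℓ (j : Fin (dims ℓ)), |nnHidden dims A b x ℓ j| ≤ 1 := by
    intro ℓ j
    cases ℓ with
    | zero => exact hx j
    | succ m => simp only [nnHidden]; exact abs_tanh_le_one _
  have hδ : ∀ m : ℕ, (0:ℝ) ≤ 2 * (m:ℝ) * R ^ (m - 1) * (W:ℝ) ^ m * ε := by
    intro m; positivity
  have hdiff : ∀ ℓ, ℓ ≤ L → ∀ j : Fin (dims ℓ),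
      |nnHidden dims A b x ℓ j - nnHidden dims A' b' x ℓ j| ≤
        2 * (ℓ:ℝ) * R ^ (ℓ - 1) * (W:ℝ) ^ ℓ * ε := by
    intro ℓ
    induction ℓ with
    | zero => intro _ j; simp [nnHidden]
    | succ m ih =>
      intro hm j
      have hmL : m < L := hm
      have hpre := affine_diff (fun jj => A m j jj) (fun jj => A' m j jj)
        (nnHidden dims A b x m) (nnHidden dims A' b' x m) (b m j) (b' m j) R ε
        (2 * (m:ℝ) * R ^ (m - 1) * (W:ℝ) ^ m * ε)
        hR0 (hδ m)
        (fun jj => hA' m hmL j jj) (fun jj => hv m jj)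
        (fun jj => hdA m hmL j jj) (ih hmL.le) (hdb m hmL j)
      have step := arith_step m (dims m) W R ε hR hε hW1 (hW m hmL.le)
      have e : (m + 1 : ℕ) - 1 = m := rfl
      rw [e]
      push_cast
      calc |nnHidden dims A b x (m+1) j - nnHidden dims A' b' x (m+1) j|
          = |Real.tanh ((∑ jj, A m j jj * nnHidden dims A b x m jj) + b m j) -
              Real.tanh ((∑ jj, A' m j jj * nnHidden dims A' b' x m jj) + b' m j)| := by
            simp only [nnHidden]
        _ ≤ |((∑ jj, A m j jj * nnHidden dims A b x m jj) + b m j) -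
              ((∑ jj, A' m j jj * nnHidden dims A' b' x m jj) + b' m j)| := tanh_lip _ _
        _ ≤ (dims m : ℝ) * ε + (dims m : ℝ) *
              (R * (2 * (m:ℝ) * R ^ (m - 1) * (W:ℝ) ^ m * ε)) + ε := hpre
        _ ≤ 2 * ((m:ℝ) + 1) * R ^ m * (W:ℝ) ^ (m + 1) * ε := step
  cases L with
  | zero => omega
  | succ m =>
    have hmL : m < m + 1 := Nat.lt_succ_self m
    have hpre := affine_diff (fun jj => A m i jj) (fun jj => A' m i jj)
      (nnHidden dims A b x m) (nnHidden dims A' b' x m) (b m i) (b' m i) R ε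
      (2 * (m:ℝ) * R ^ (m - 1) * (W:ℝ) ^ m * ε)
      hR0 (hδ m)
      (fun jj => hA' m hmL i jj) (fun jj => hv m jj)
      (fun jj => hdA m hmL i jj) (hdiff m hmL.le) (hdb m hmL i)
    have step := arith_step m (dims m) W R ε hR hε hW1 (hW m hmL.le)
    have e : (m + 1 : ℕ) - 1 = m := rfl
    rw [e]
    push_cast
    calc |nnRealize dims (m+1) A b x i - nnRealize dims (m+1) A' b' x i|
        = |((∑ jj, A m i jj * nnHidden dims A b x m jj) + b m i) -
            ((∑ jj, A' m i jj * nnHidden dims A' b' x m jj) + b' m i)| := by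
          simp only [nnRealize]
      _ ≤ (dims m : ℝ) * ε + (dims m : ℝ) *
            (R * (2 * (m:ℝ) * R ^ (m - 1) * (W:ℝ) ^ m * ε)) + ε := hpre
      _ ≤ 2 * ((m:ℝ) + 1) * R ^ m * (W:ℝ) ^ (m + 1) * ε := step
end

section
/- Let θ and θ̃ be two tanh neural network parameters of depth L ≥ 1 with the same layer dimensions (d, d_1, …, d_{L−1}, 1) and width W, satisfying ‖θ‖_{ℓ∞} ≤ R and ‖θ̃‖_{ℓ∞} ≤ R for some R ≥ 1. Then the gradients of their realizations v_θ, v_{θ̃} : ℝ^d → ℝ satisfy ‖∇v_θ(x) − ∇v_{θ̃}(x)‖_{ℓ2} ≤ √d · L² R^{2L−2} W^{2L−2} ‖θ − θ̃‖_{ℓ∞} for every x ∈ ℝ^d with ‖x‖_{ℓ∞} ≤ 1. -/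
/-! ### tanh toolkit -/

lemma myHasDerivAt_tanh (t : ℝ) : HasDerivAt Real.tanh (1 - Real.tanh t ^ 2) t := by
  have h := (Real.hasDerivAt_sinh t).div (Real.hasDerivAt_cosh t) (Real.cosh_pos t).ne'
  have hfun : Real.tanh = fun x => Real.sinh x / Real.cosh x := by
    funext y; exact Real.tanh_eq_sinh_div_cosh y
  rw [hfun]
  refine h.congr_deriv (Eq.symm ?_)
  show 1 - (Real.sinh t / Real.cosh t) ^ 2 = _
  have hc := (Real.cosh_pos t).ne'
  rw [div_pow, one_sub_div (pow_ne_zero 2 hc)]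
  ring

lemma myAbs_tanh_le_one (t : ℝ) : |Real.tanh t| ≤ 1 := by
  rw [Real.tanh_eq_sinh_div_cosh, abs_div, abs_of_pos (Real.cosh_pos t),
    div_le_one (Real.cosh_pos t), abs_le]
  constructor
  · nlinarith [Real.cosh_add_sinh t, Real.exp_pos t]
  · nlinarith [Real.cosh_sub_sinh t, Real.exp_pos (-t)]

lemma sigma'_abs_le (t : ℝ) : |1 - Real.tanh t ^ 2| ≤ 1 := by
  have h := myAbs_tanh_le_one t
  rw [abs_le] at h ⊢
  constructor <;> nlinarith

lemma lip_of_deriv {f f' : ℝ → ℝ} {C : ℝ} (hf : ∀ t, HasDerivAt f (f' t) t)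
    (hb : ∀ t, |f' t| ≤ C) (p q : ℝ) : |f p - f q| ≤ C * |p - q| := by
  simpa [Real.norm_eq_abs] using
    (convex_univ : Convex ℝ (Set.univ : Set ℝ)).norm_image_sub_le_of_norm_hasDerivWithin_le
      (fun t _ => (hf t).hasDerivWithinAt) (fun t _ => by simpa [Real.norm_eq_abs] using hb t)
      (Set.mem_univ q) (Set.mem_univ p)

lemma tanh_lip_s4 (p q : ℝ) : |Real.tanh p - Real.tanh q| ≤ |p - q| := by
  have := lip_of_deriv (f := Real.tanh) (f' := fun t => 1 - Real.tanh t ^ 2) (C := 1)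
    myHasDerivAt_tanh (fun t => sigma'_abs_le t) p q
  simpa using this

lemma tanh_sq_lip (p q : ℝ) : |Real.tanh p ^ 2 - Real.tanh q ^ 2| ≤ |p - q| := by
  have := lip_of_deriv (f := fun t => Real.tanh t ^ 2)
    (f' := fun t => 2 * Real.tanh t * (1 - Real.tanh t ^ 2)) (C := 1)
    (fun t => by simpa [mul_comm, mul_assoc, mul_left_comm] using (myHasDerivAt_tanh t).fun_pow 2)
    (fun t => by
      have h1 := myAbs_tanh_le_one t
      rw [abs_le] at h1
      show |2 * Real.tanh t * (1 - Real.tanh t ^ 2)| ≤ 1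
      rw [abs_le]
      constructor <;> nlinarith [sq_nonneg (Real.tanh t - 1), sq_nonneg (Real.tanh t + 1),
        sq_nonneg (2*Real.tanh t - 1), sq_nonneg (2*Real.tanh t + 1)]) p q
  simpa using this

/-! ### derivative of the network -/

noncomputable def nnDer (dims : ℕ → ℕ)
    (A : ∀ ℓ : ℕ, Matrix (Fin (dims (ℓ + 1))) (Fin (dims ℓ)) ℝ)
    (b : ∀ ℓ : ℕ, Fin (dims (ℓ + 1)) → ℝ)
    (x : Fin (dims 0) → ℝ) : (ℓ : ℕ) → Fin (dims ℓ) → ((Fin (dims 0) → ℝ) →L[ℝ] ℝ)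
  | 0 => fun i => ContinuousLinearMap.proj i
  | ℓ + 1 => fun i =>
      (1 - Real.tanh ((∑ j, A ℓ i j * nnHidden dims A b x ℓ j) + b ℓ i) ^ 2) •
        ∑ j, A ℓ i j • nnDer dims A b x ℓ j

lemma hasFDerivAt_nnHidden (dims : ℕ → ℕ)
    (A : ∀ ℓ : ℕ, Matrix (Fin (dims (ℓ + 1))) (Fin (dims ℓ)) ℝ)
    (b : ∀ ℓ : ℕ, Fin (dims (ℓ + 1)) → ℝ)
    (x : Fin (dims 0) → ℝ) :
    ∀ ℓ (i : Fin (dims ℓ)),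
      HasFDerivAt (fun y => nnHidden dims A b y ℓ i) (nnDer dims A b x ℓ i) x := by
  intro ℓ
  induction ℓ with
  | zero => intro i; exact hasFDerivAt_apply i x
  | succ ℓ ih =>
    intro i
    have hin : HasFDerivAt (fun y => (∑ j, A ℓ i j * nnHidden dims A b y ℓ j) + b ℓ i)
        (∑ j, A ℓ i j • nnDer dims A b x ℓ j) x :=
      (HasFDerivAt.fun_sum (fun j _ => (ih j).const_mul (A ℓ i j))).add_const (b ℓ i)
    exact (myHasDerivAt_tanh _).comp_hasFDerivAt x hin

lemma nnDer_succ_apply (dims : ℕ → ℕ)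
    (A : ∀ ℓ : ℕ, Matrix (Fin (dims (ℓ + 1))) (Fin (dims ℓ)) ℝ)
    (b : ∀ ℓ : ℕ, Fin (dims (ℓ + 1)) → ℝ)
    (x : Fin (dims 0) → ℝ) (ℓ : ℕ) (i : Fin (dims (ℓ + 1))) (u : Fin (dims 0) → ℝ) :
    nnDer dims A b x (ℓ + 1) i u =
      (1 - Real.tanh ((∑ j, A ℓ i j * nnHidden dims A b x ℓ j) + b ℓ i) ^ 2) *
        ∑ k, A ℓ i k * nnDer dims A b x ℓ k u := by
  simp [nnDer, ContinuousLinearMap.sum_apply, smul_eq_mul]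

lemma nnHidden_abs_le (dims : ℕ → ℕ)
    (A : ∀ ℓ : ℕ, Matrix (Fin (dims (ℓ + 1))) (Fin (dims ℓ)) ℝ)
    (b : ∀ ℓ : ℕ, Fin (dims (ℓ + 1)) → ℝ)
    (x : Fin (dims 0) → ℝ) (hx : ∀ j, |x j| ≤ 1) :
    ∀ ℓ (i : Fin (dims ℓ)), |nnHidden dims A b x ℓ i| ≤ 1 := by
  intro ℓ i
  cases ℓ with
  | zero => exact hx i
  | succ ℓ => exact myAbs_tanh_le_one _

section Bounds

variable (dims : ℕ → ℕ) (L : ℕ)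
    (A A' : ∀ ℓ : ℕ, Matrix (Fin (dims (ℓ + 1))) (Fin (dims ℓ)) ℝ)
    (b b' : ∀ ℓ : ℕ, Fin (dims (ℓ + 1)) → ℝ)
    (W : ℕ) (R : ℝ) (ε : ℝ) (x : Fin (dims 0) → ℝ)

lemma nnDer_sum_abs_le (hR : 1 ≤ R) (hW : ∀ ℓ ≤ L, dims ℓ ≤ W)
    (hA : ∀ ℓ < L, ∀ i j, |A ℓ i j| ≤ R) (j : Fin (dims 0)) :
    ∀ ℓ, ℓ ≤ L → ∑ k, |nnDer dims A b x ℓ k (Pi.single j 1)| ≤ (R * W) ^ ℓ := by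
  have hR0 : (0:ℝ) ≤ R := by linarith
  intro ℓ
  induction ℓ with
  | zero =>
    intro _
    simp [nnDer, Pi.single_apply, apply_ite abs]
  | succ ℓ ih =>
    intro hℓ
    have hℓL : ℓ ≤ L := Nat.le_of_succ_le hℓ
    have hℓlt : ℓ < L := hℓ
    have hS := ih hℓL
    have hS0 : 0 ≤ ∑ k, |nnDer dims A b x ℓ k (Pi.single j 1)| :=
      Finset.sum_nonneg fun k _ => abs_nonneg _
    have hper : ∀ i : Fin (dims (ℓ + 1)),
        |nnDer dims A b x (ℓ + 1) i (Pi.single j 1)| ≤ R * (R * W) ^ ℓ := by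
      intro i
      rw [nnDer_succ_apply, abs_mul]
      have h1 := sigma'_abs_le ((∑ k, A ℓ i k * nnHidden dims A b x ℓ k) + b ℓ i)
      have h2 : |∑ k, A ℓ i k * nnDer dims A b x ℓ k (Pi.single j 1)| ≤ R * (R * W) ^ ℓ := by
        calc |∑ k, A ℓ i k * nnDer dims A b x ℓ k (Pi.single j 1)|
            ≤ ∑ k, |A ℓ i k * nnDer dims A b x ℓ k (Pi.single j 1)| :=
              Finset.abs_sum_le_sum_abs _ _
          _ ≤ ∑ k, R * |nnDer dims A b x ℓ k (Pi.single j 1)| := by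
              refine Finset.sum_le_sum fun k _ => ?_
              rw [abs_mul]
              exact mul_le_mul_of_nonneg_right (hA ℓ hℓlt i k) (abs_nonneg _)
          _ = R * ∑ k, |nnDer dims A b x ℓ k (Pi.single j 1)| := by rw [Finset.mul_sum]
          _ ≤ R * (R * W) ^ ℓ := mul_le_mul_of_nonneg_left hS hR0
      calc |1 - Real.tanh _ ^ 2| * |∑ k, A ℓ i k * nnDer dims A b x ℓ k (Pi.single j 1)|
          ≤ 1 * (R * (R * W) ^ ℓ) := mul_le_mul h1 h2 (abs_nonneg _) zero_le_one
        _ = R * (R * W) ^ ℓ := one_mul _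
    calc ∑ i, |nnDer dims A b x (ℓ + 1) i (Pi.single j 1)|
        ≤ ∑ _i : Fin (dims (ℓ + 1)), R * (R * W) ^ ℓ := Finset.sum_le_sum fun i _ => hper i
      _ = (dims (ℓ + 1) : ℝ) * (R * (R * W) ^ ℓ) := by
          rw [Finset.sum_const, Finset.card_univ]; simp [Fintype.card_fin, nsmul_eq_mul]
      _ ≤ (W : ℝ) * (R * (R * W) ^ ℓ) := by
          refine mul_le_mul_of_nonneg_right ?_ (by positivity)
          exact_mod_cast hW (ℓ + 1) hℓ
      _ = (R * W) ^ (ℓ + 1) := by rw [pow_succ]; ring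

lemma preact_step
    (hR : 1 ≤ R) (hW1 : (1:ℝ) ≤ W) (hW : ∀ ℓ ≤ L, dims ℓ ≤ W)
    (hε : 0 ≤ ε) (hx : ∀ j, |x j| ≤ 1)
    (hA : ∀ ℓ < L, ∀ i j, |A ℓ i j| ≤ R)
    (hdA : ∀ ℓ < L, ∀ i j, |A ℓ i j - A' ℓ i j| ≤ ε)
    (hdb : ∀ ℓ < L, ∀ i, |b ℓ i - b' ℓ i| ≤ ε)
    (ℓ : ℕ) (hℓ : ℓ < L) (i : Fin (dims (ℓ + 1)))
    (hsum : (R * W) * (∑ k, |nnHidden dims A b x ℓ k - nnHidden dims A' b' x ℓ k|) ≤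
      (W : ℝ) * ((ℓ : ℝ) * ((W : ℝ) + 1) * ε * (R * W) ^ ℓ)) :
    (R * W) * |((∑ k, A ℓ i k * nnHidden dims A b x ℓ k) + b ℓ i) -
        ((∑ k, A' ℓ i k * nnHidden dims A' b' x ℓ k) + b' ℓ i)| ≤
      ((ℓ : ℝ) + 1) * ((W : ℝ) + 1) * ε * (R * W) ^ (ℓ + 1) := by
  have hR0 : (0:ℝ) ≤ R := by linarith
  have hr1 : (1:ℝ) ≤ R * W := by nlinarith
  have hr0 : (0:ℝ) ≤ R * W := by linarith
  have hdimsW : ((dims ℓ : ℕ) : ℝ) ≤ (W : ℝ) := by exact_mod_cast hW ℓ hℓ.le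
  set H := nnHidden dims A b x ℓ with hH
  set H' := nnHidden dims A' b' x ℓ with hH'
  set S := ∑ k, |H k - H' k| with hSdef
  have hS0 : 0 ≤ S := Finset.sum_nonneg fun k _ => abs_nonneg _
  have hterm : ∀ k, |A ℓ i k * H k - A' ℓ i k * H' k| ≤ ε + R * |H k - H' k| := by
    intro k
    have hre : A ℓ i k * H k - A' ℓ i k * H' k
        = (A ℓ i k - A' ℓ i k) * H' k + A ℓ i k * (H k - H' k) := by ring
    rw [hre]
    refine (abs_add_le _ _).trans (add_le_add ?_ ?_)
    · rw [abs_mul]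
      have := mul_le_mul (hdA ℓ hℓ i k) (nnHidden_abs_le dims A' b' x hx ℓ k)
        (abs_nonneg _) hε
      simpa using this
    · rw [abs_mul]
      exact mul_le_mul_of_nonneg_right (hA ℓ hℓ i k) (abs_nonneg _)
  have habs : |((∑ k, A ℓ i k * H k) + b ℓ i) - ((∑ k, A' ℓ i k * H' k) + b' ℓ i)| ≤
      ((dims ℓ : ℝ)) * ε + ε + R * S := by
    have hre : ((∑ k, A ℓ i k * H k) + b ℓ i) - ((∑ k, A' ℓ i k * H' k) + b' ℓ i)
        = (∑ k, (A ℓ i k * H k - A' ℓ i k * H' k)) + (b ℓ i - b' ℓ i) := by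
      rw [Finset.sum_sub_distrib]; ring
    rw [hre]
    refine (abs_add_le _ _).trans ?_
    have h1 : |∑ k, (A ℓ i k * H k - A' ℓ i k * H' k)| ≤
        ∑ k, (ε + R * |H k - H' k|) :=
      (Finset.abs_sum_le_sum_abs _ _).trans (Finset.sum_le_sum fun k _ => hterm k)
    have h2 : ∑ k, (ε + R * |H k - H' k|) = (dims ℓ : ℝ) * ε + R * S := by
      rw [Finset.sum_add_distrib, ← Finset.mul_sum, Finset.sum_const, Finset.card_univ]
      simp [Fintype.card_fin, nsmul_eq_mul, hSdef]
    have h3 := hdb ℓ hℓ i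
    linarith
  calc (R * W) * |((∑ k, A ℓ i k * H k) + b ℓ i) - ((∑ k, A' ℓ i k * H' k) + b' ℓ i)|
      ≤ (R * W) * ((dims ℓ : ℝ) * ε + ε + R * S) := mul_le_mul_of_nonneg_left habs hr0
    _ = ((dims ℓ : ℝ) + 1) * ε * (R * W) + R * ((R * W) * S) := by ring
    _ ≤ ((W : ℝ) + 1) * ε * (R * W)
        + R * ((W : ℝ) * ((ℓ : ℝ) * ((W : ℝ) + 1) * ε * (R * W) ^ ℓ)) := by
        refine add_le_add ?_ (mul_le_mul_of_nonneg_left hsum hR0)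
        have h4 : ((dims ℓ : ℝ) + 1) ≤ ((W : ℝ) + 1) := by linarith
        have h0 : 0 ≤ ε * (R * W) := mul_nonneg hε hr0
        nlinarith
    _ ≤ ((W : ℝ) + 1) * ε * (R * W) ^ (ℓ + 1)
        + (ℓ : ℝ) * ((W : ℝ) + 1) * ε * (R * W) ^ (ℓ + 1) := by
        refine add_le_add ?_ (le_of_eq (by rw [pow_succ]; ring))
        have hpow : (R * W) ≤ (R * W) ^ (ℓ + 1) := by
          calc (R * W) = (R * W) ^ 1 := (pow_one _).symm
            _ ≤ (R * W) ^ (ℓ + 1) := pow_le_pow_right₀ hr1 (by omega)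
        have h0 : 0 ≤ ((W : ℝ) + 1) * ε := mul_nonneg (by linarith) hε
        nlinarith
    _ = ((ℓ : ℝ) + 1) * ((W : ℝ) + 1) * ε * (R * W) ^ (ℓ + 1) := by ring

lemma diff_preact
    (hR : 1 ≤ R) (hW1 : (1:ℝ) ≤ W) (hW : ∀ ℓ ≤ L, dims ℓ ≤ W)
    (hε : 0 ≤ ε) (hx : ∀ j, |x j| ≤ 1)
    (hA : ∀ ℓ < L, ∀ i j, |A ℓ i j| ≤ R)
    (hdA : ∀ ℓ < L, ∀ i j, |A ℓ i j - A' ℓ i j| ≤ ε)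
    (hdb : ∀ ℓ < L, ∀ i, |b ℓ i - b' ℓ i| ≤ ε) :
    ∀ ℓ, ℓ < L → ∀ i : Fin (dims (ℓ + 1)),
      (R * W) * |((∑ k, A ℓ i k * nnHidden dims A b x ℓ k) + b ℓ i) -
          ((∑ k, A' ℓ i k * nnHidden dims A' b' x ℓ k) + b' ℓ i)| ≤
        ((ℓ : ℝ) + 1) * ((W : ℝ) + 1) * ε * (R * W) ^ (ℓ + 1) := by
  have hR0 : (0:ℝ) ≤ R := by linarith
  have hr1 : (1:ℝ) ≤ R * W := by nlinarith
  have hr0 : (0:ℝ) ≤ R * W := by linarith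
  intro ℓ
  induction ℓ with
  | zero =>
    intro hℓ i
    refine preact_step dims L A A' b b' W R ε x hR hW1 hW hε hx hA hdA hdb 0 hℓ i ?_
    simp [nnHidden]
  | succ ℓ ih =>
    intro hℓ i
    have hℓlt : ℓ < L := Nat.lt_of_succ_lt hℓ
    refine preact_step dims L A A' b b' W R ε x hR hW1 hW hε hx hA hdA hdb (ℓ + 1) hℓ i ?_
    have hc0 : 0 ≤ ((ℓ : ℝ) + 1) * ((W : ℝ) + 1) * ε * (R * W) ^ (ℓ + 1) :=
      mul_nonneg (mul_nonneg (mul_nonneg (by positivity) (by positivity)) hε) (by positivity)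
    calc (R * W) * ∑ k, |nnHidden dims A b x (ℓ + 1) k - nnHidden dims A' b' x (ℓ + 1) k|
        = ∑ k, (R * W) * |nnHidden dims A b x (ℓ + 1) k - nnHidden dims A' b' x (ℓ + 1) k| := by
          rw [Finset.mul_sum]
      _ ≤ ∑ _k : Fin (dims (ℓ + 1)), ((ℓ : ℝ) + 1) * ((W : ℝ) + 1) * ε * (R * W) ^ (ℓ + 1) := by
          refine Finset.sum_le_sum fun k _ => ?_
          have hlip : |nnHidden dims A b x (ℓ + 1) k - nnHidden dims A' b' x (ℓ + 1) k| ≤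
              |((∑ m, A ℓ k m * nnHidden dims A b x ℓ m) + b ℓ k) -
                ((∑ m, A' ℓ k m * nnHidden dims A' b' x ℓ m) + b' ℓ k)| := tanh_lip_s4 _ _
          exact (mul_le_mul_of_nonneg_left hlip hr0).trans (ih hℓlt k)
      _ = (dims (ℓ + 1) : ℝ) * (((ℓ : ℝ) + 1) * ((W : ℝ) + 1) * ε * (R * W) ^ (ℓ + 1)) := by
          rw [Finset.sum_const, Finset.card_univ]; simp [Fintype.card_fin, nsmul_eq_mul]
      _ ≤ (W : ℝ) * (((ℓ : ℝ) + 1) * ((W : ℝ) + 1) * ε * (R * W) ^ (ℓ + 1)) := by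
          refine mul_le_mul_of_nonneg_right ?_ hc0
          exact_mod_cast hW (ℓ + 1) hℓ.le
      _ = (W : ℝ) * (((ℓ + 1 : ℕ) : ℝ) * ((W : ℝ) + 1) * ε * (R * W) ^ (ℓ + 1)) := by
          push_cast; ring

/-- The difference of the affine combinations of the derivatives. -/
lemma diff_sumAg
    (hR : 1 ≤ R) (hW : ∀ ℓ ≤ L, dims ℓ ≤ W)
    (hε : 0 ≤ ε)
    (hA : ∀ ℓ < L, ∀ i j, |A ℓ i j| ≤ R)
    (hA' : ∀ ℓ < L, ∀ i j, |A' ℓ i j| ≤ R)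
    (hdA : ∀ ℓ < L, ∀ i j, |A ℓ i j - A' ℓ i j| ≤ ε)
    (j : Fin (dims 0)) (ℓ : ℕ) (hℓ : ℓ < L) (i : Fin (dims (ℓ + 1))) :
    |(∑ k, A ℓ i k * nnDer dims A b x ℓ k (Pi.single j 1)) -
        (∑ k, A' ℓ i k * nnDer dims A' b' x ℓ k (Pi.single j 1))| ≤
      ε * (R * W) ^ ℓ +
        R * ∑ k, |nnDer dims A b x ℓ k (Pi.single j 1) -
          nnDer dims A' b' x ℓ k (Pi.single j 1)| := by
  have hR0 : (0:ℝ) ≤ R := by linarith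
  set g := fun k => nnDer dims A b x ℓ k (Pi.single j 1) with hg
  set g' := fun k => nnDer dims A' b' x ℓ k (Pi.single j 1) with hg'
  have hper : ∀ k, |A ℓ i k * g k - A' ℓ i k * g' k| ≤ ε * |g k| + R * |g k - g' k| := by
    intro k
    have hre : A ℓ i k * g k - A' ℓ i k * g' k
        = (A ℓ i k - A' ℓ i k) * g k + A' ℓ i k * (g k - g' k) := by ring
    rw [hre]
    refine (abs_add_le _ _).trans (add_le_add ?_ ?_)
    · rw [abs_mul]
      exact mul_le_mul_of_nonneg_right (hdA ℓ hℓ i k) (abs_nonneg _)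
    · rw [abs_mul]
      exact mul_le_mul_of_nonneg_right (hA' ℓ hℓ i k) (abs_nonneg _)
  calc |(∑ k, A ℓ i k * g k) - (∑ k, A' ℓ i k * g' k)|
      = |∑ k, (A ℓ i k * g k - A' ℓ i k * g' k)| := by rw [Finset.sum_sub_distrib]
    _ ≤ ∑ k, |A ℓ i k * g k - A' ℓ i k * g' k| := Finset.abs_sum_le_sum_abs _ _
    _ ≤ ∑ k, (ε * |g k| + R * |g k - g' k|) := Finset.sum_le_sum fun k _ => hper k
    _ = ε * (∑ k, |g k|) + R * ∑ k, |g k - g' k| := by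
        rw [Finset.sum_add_distrib, ← Finset.mul_sum, ← Finset.mul_sum]
    _ ≤ ε * (R * W) ^ ℓ + R * ∑ k, |g k - g' k| := by
        refine add_le_add_left (mul_le_mul_of_nonneg_left ?_ hε) _
        exact nnDer_sum_abs_le dims L A b W R x hR hW hA j ℓ hℓ.le


lemma diff_der
    (hR : 1 ≤ R) (hW1 : (1:ℝ) ≤ W) (hW : ∀ ℓ ≤ L, dims ℓ ≤ W)
    (hε : 0 ≤ ε) (hx : ∀ j, |x j| ≤ 1)
    (hA : ∀ ℓ < L, ∀ i j, |A ℓ i j| ≤ R)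
    (hA' : ∀ ℓ < L, ∀ i j, |A' ℓ i j| ≤ R)
    (hdA : ∀ ℓ < L, ∀ i j, |A ℓ i j - A' ℓ i j| ≤ ε)
    (hdb : ∀ ℓ < L, ∀ i, |b ℓ i - b' ℓ i| ≤ ε)
    (j : Fin (dims 0)) :
    ∀ ℓ, ℓ ≤ L → ∀ i : Fin (dims ℓ),
      (R * W) ^ 2 * |nnDer dims A b x ℓ i (Pi.single j 1) -
          nnDer dims A' b' x ℓ i (Pi.single j 1)| ≤
        (((W : ℝ) + 1) * R * ((ℓ : ℝ) * ((ℓ : ℝ) + 1) / 2) * (R * W) ^ (2 * ℓ)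
          + (ℓ : ℝ) * (R * W) ^ (ℓ + 1)) * ε := by
  have hR0 : (0:ℝ) ≤ R := by linarith
  have hr1 : (1:ℝ) ≤ R * W := by nlinarith
  have hr0 : (0:ℝ) ≤ R * W := by linarith
  intro ℓ
  induction ℓ with
  | zero => intro _ i; simp [nnDer]
  | succ ℓ ih =>
    intro hℓ1 i
    have hℓlt : ℓ < L := hℓ1
    have hℓL : ℓ ≤ L := Nat.le_of_succ_le hℓ1
    rw [nnDer_succ_apply, nnDer_succ_apply]
    set g := fun k => nnDer dims A b x ℓ k (Pi.single j 1) with hgdef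
    set g' := fun k => nnDer dims A' b' x ℓ k (Pi.single j 1) with hg'def
    set s := (∑ k, A ℓ i k * nnHidden dims A b x ℓ k) + b ℓ i with hsdef
    set s' := (∑ k, A' ℓ i k * nnHidden dims A' b' x ℓ k) + b' ℓ i with hs'def
    set P := ∑ k, A ℓ i k * g k with hPdef
    set P' := ∑ k, A' ℓ i k * g' k with hP'def
    set S3 := ∑ k, |g k - g' k| with hS3def
    have hsplit : (1 - Real.tanh s ^ 2) * P - (1 - Real.tanh s' ^ 2) * P'
        = (Real.tanh s' ^ 2 - Real.tanh s ^ 2) * P + (1 - Real.tanh s' ^ 2) * (P - P') := by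
      ring
    rw [hsplit]
    have h1 : |Real.tanh s' ^ 2 - Real.tanh s ^ 2| ≤ |s - s'| := by
      simpa [abs_sub_comm] using tanh_sq_lip s' s
    have hP : |P| ≤ R * (R * W) ^ ℓ := by
      calc |P| ≤ ∑ k, |A ℓ i k * g k| := Finset.abs_sum_le_sum_abs _ _
        _ ≤ ∑ k, R * |g k| := by
            refine Finset.sum_le_sum fun k _ => ?_
            rw [abs_mul]
            exact mul_le_mul_of_nonneg_right (hA ℓ hℓlt i k) (abs_nonneg _)
        _ = R * ∑ k, |g k| := by rw [Finset.mul_sum]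
        _ ≤ R * (R * W) ^ ℓ := mul_le_mul_of_nonneg_left
            (nnDer_sum_abs_le dims L A b W R x hR hW hA j ℓ hℓL) hR0
    have hPP' : |P - P'| ≤ ε * (R * W) ^ ℓ + R * S3 :=
      diff_sumAg dims L A A' b b' W R ε x hR hW hε hA hA' hdA j ℓ hℓlt i
    have hΔs : (R * W) * |s - s'| ≤ ((ℓ : ℝ) + 1) * ((W : ℝ) + 1) * ε * (R * W) ^ (ℓ + 1) :=
      diff_preact dims L A A' b b' W R ε x hR hW1 hW hε hx hA hdA hdb ℓ hℓlt i
    have hB0 : 0 ≤ (((W : ℝ) + 1) * R * ((ℓ : ℝ) * ((ℓ : ℝ) + 1) / 2) * (R * W) ^ (2 * ℓ)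
          + (ℓ : ℝ) * (R * W) ^ (ℓ + 1)) * ε := by
      refine mul_nonneg (add_nonneg ?_ (by positivity)) hε
      exact mul_nonneg (mul_nonneg (mul_nonneg (by positivity) hR0) (by positivity)) (by positivity)
    have hS3b : (R * W) ^ 2 * S3 ≤ (W : ℝ) *
        ((((W : ℝ) + 1) * R * ((ℓ : ℝ) * ((ℓ : ℝ) + 1) / 2) * (R * W) ^ (2 * ℓ)
          + (ℓ : ℝ) * (R * W) ^ (ℓ + 1)) * ε) := by
      calc (R * W) ^ 2 * S3 = ∑ k, (R * W) ^ 2 * |g k - g' k| := by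
            rw [hS3def, Finset.mul_sum]
        _ ≤ ∑ _k : Fin (dims ℓ), ((((W : ℝ) + 1) * R * ((ℓ : ℝ) * ((ℓ : ℝ) + 1) / 2)
              * (R * W) ^ (2 * ℓ) + (ℓ : ℝ) * (R * W) ^ (ℓ + 1)) * ε) :=
            Finset.sum_le_sum fun k _ => ih hℓL k
        _ = (dims ℓ : ℝ) * ((((W : ℝ) + 1) * R * ((ℓ : ℝ) * ((ℓ : ℝ) + 1) / 2)
              * (R * W) ^ (2 * ℓ) + (ℓ : ℝ) * (R * W) ^ (ℓ + 1)) * ε) := by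
            rw [Finset.sum_const, Finset.card_univ]; simp [Fintype.card_fin, nsmul_eq_mul]
        _ ≤ (W : ℝ) * _ := by
            refine mul_le_mul_of_nonneg_right ?_ hB0
            exact_mod_cast hW ℓ hℓL
    have hX : |(Real.tanh s' ^ 2 - Real.tanh s ^ 2) * P + (1 - Real.tanh s' ^ 2) * (P - P')|
        ≤ |s - s'| * (R * (R * W) ^ ℓ) + (ε * (R * W) ^ ℓ + R * S3) := by
      refine (abs_add_le _ _).trans (add_le_add ?_ ?_)
      · rw [abs_mul]
        exact mul_le_mul h1 hP (abs_nonneg _) (abs_nonneg _)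
      · rw [abs_mul]
        calc |1 - Real.tanh s' ^ 2| * |P - P'| ≤ 1 * |P - P'| :=
              mul_le_mul_of_nonneg_right (sigma'_abs_le s') (abs_nonneg _)
          _ = |P - P'| := one_mul _
          _ ≤ ε * (R * W) ^ ℓ + R * S3 := hPP'
    have hpow : (R * W) ^ (2 * ℓ + 1) ≤ (R * W) ^ (2 * ℓ + 2) :=
      pow_le_pow_right₀ hr1 (by omega)
    have hcoef : 0 ≤ ((W : ℝ) + 1) * R * ((ℓ : ℝ) * ((ℓ : ℝ) + 1) / 2) * ε :=
      mul_nonneg (mul_nonneg (mul_nonneg (by positivity) hR0) (by positivity)) hε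
    have hkey := mul_le_mul_of_nonneg_left hpow hcoef
    calc (R * W) ^ 2 * |(Real.tanh s' ^ 2 - Real.tanh s ^ 2) * P
            + (1 - Real.tanh s' ^ 2) * (P - P')|
        ≤ (R * W) ^ 2 * (|s - s'| * (R * (R * W) ^ ℓ) + (ε * (R * W) ^ ℓ + R * S3)) :=
          mul_le_mul_of_nonneg_left hX (by positivity)
      _ = ((R * W) * |s - s'|) * (R * (R * W) ^ (ℓ + 1))
            + (ε * (R * W) ^ (ℓ + 2) + R * ((R * W) ^ 2 * S3)) := by ring
      _ ≤ (((ℓ : ℝ) + 1) * ((W : ℝ) + 1) * ε * (R * W) ^ (ℓ + 1)) * (R * (R * W) ^ (ℓ + 1))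
            + (ε * (R * W) ^ (ℓ + 2) + R * ((W : ℝ) *
              ((((W : ℝ) + 1) * R * ((ℓ : ℝ) * ((ℓ : ℝ) + 1) / 2) * (R * W) ^ (2 * ℓ)
                + (ℓ : ℝ) * (R * W) ^ (ℓ + 1)) * ε))) := by
          refine add_le_add (mul_le_mul_of_nonneg_right hΔs (by positivity))
            (add_le_add_right (mul_le_mul_of_nonneg_left hS3b hR0) _)
      _ = ((((W : ℝ) + 1) * R * ((ℓ : ℝ) + 1)) * ε * (R * W) ^ (2 * ℓ + 2)
            + (((W : ℝ) + 1) * R * ((ℓ : ℝ) * ((ℓ : ℝ) + 1) / 2)) * ε * (R * W) ^ (2 * ℓ + 1)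
            + ((ℓ : ℝ) + 1) * ε * (R * W) ^ (ℓ + 2)) := by ring
      _ ≤ ((((W : ℝ) + 1) * R * ((ℓ : ℝ) + 1)) * ε * (R * W) ^ (2 * ℓ + 2)
            + (((W : ℝ) + 1) * R * ((ℓ : ℝ) * ((ℓ : ℝ) + 1) / 2)) * ε * (R * W) ^ (2 * ℓ + 2)
            + ((ℓ : ℝ) + 1) * ε * (R * W) ^ (ℓ + 2)) := by nlinarith [hkey]
      _ = (((W : ℝ) + 1) * R * (((ℓ : ℝ) + 1) * (((ℓ : ℝ) + 1) + 1) / 2) * (R * W) ^ (2 * (ℓ + 1))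
            + ((ℓ : ℝ) + 1) * (R * W) ^ ((ℓ + 1) + 1)) * ε := by ring
      _ = ((((W : ℝ) + 1) * R * (((ℓ + 1 : ℕ) : ℝ) * (((ℓ + 1 : ℕ) : ℝ) + 1) / 2)
            * (R * W) ^ (2 * (ℓ + 1)) + ((ℓ + 1 : ℕ) : ℝ) * (R * W) ^ ((ℓ + 1) + 1)) * ε) := by
          push_cast; ring


lemma diff_der_sum
    (hR : 1 ≤ R) (hW1 : (1:ℝ) ≤ W) (hW : ∀ ℓ ≤ L, dims ℓ ≤ W)
    (hε : 0 ≤ ε) (hx : ∀ j, |x j| ≤ 1)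
    (hA : ∀ ℓ < L, ∀ i j, |A ℓ i j| ≤ R)
    (hA' : ∀ ℓ < L, ∀ i j, |A' ℓ i j| ≤ R)
    (hdA : ∀ ℓ < L, ∀ i j, |A ℓ i j - A' ℓ i j| ≤ ε)
    (hdb : ∀ ℓ < L, ∀ i, |b ℓ i - b' ℓ i| ≤ ε)
    (j : Fin (dims 0)) (ℓ : ℕ) (hℓ : ℓ ≤ L) :
    (R * W) ^ 2 * (∑ k, |nnDer dims A b x ℓ k (Pi.single j 1) -
        nnDer dims A' b' x ℓ k (Pi.single j 1)|) ≤
      (W : ℝ) * ((((W : ℝ) + 1) * R * ((ℓ : ℝ) * ((ℓ : ℝ) + 1) / 2) * (R * W) ^ (2 * ℓ)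
        + (ℓ : ℝ) * (R * W) ^ (ℓ + 1)) * ε) := by
  have hR0 : (0:ℝ) ≤ R := by linarith
  have hB0 : 0 ≤ (((W : ℝ) + 1) * R * ((ℓ : ℝ) * ((ℓ : ℝ) + 1) / 2) * (R * W) ^ (2 * ℓ)
        + (ℓ : ℝ) * (R * W) ^ (ℓ + 1)) * ε := by
    refine mul_nonneg (add_nonneg ?_ (by positivity)) hε
    exact mul_nonneg (mul_nonneg (mul_nonneg (by positivity) hR0) (by positivity)) (by positivity)
  calc (R * W) ^ 2 * (∑ k, |nnDer dims A b x ℓ k (Pi.single j 1) -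
          nnDer dims A' b' x ℓ k (Pi.single j 1)|)
      = ∑ k, (R * W) ^ 2 * |nnDer dims A b x ℓ k (Pi.single j 1) -
          nnDer dims A' b' x ℓ k (Pi.single j 1)| := by rw [Finset.mul_sum]
    _ ≤ ∑ _k : Fin (dims ℓ), ((((W : ℝ) + 1) * R * ((ℓ : ℝ) * ((ℓ : ℝ) + 1) / 2)
          * (R * W) ^ (2 * ℓ) + (ℓ : ℝ) * (R * W) ^ (ℓ + 1)) * ε) :=
        Finset.sum_le_sum fun k _ =>
          diff_der dims L A A' b b' W R ε x hR hW1 hW hε hx hA hA' hdA hdb j ℓ hℓ k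
    _ = (dims ℓ : ℝ) * ((((W : ℝ) + 1) * R * ((ℓ : ℝ) * ((ℓ : ℝ) + 1) / 2)
          * (R * W) ^ (2 * ℓ) + (ℓ : ℝ) * (R * W) ^ (ℓ + 1)) * ε) := by
        rw [Finset.sum_const, Finset.card_univ]; simp [Fintype.card_fin, nsmul_eq_mul]
    _ ≤ (W : ℝ) * _ := by
        refine mul_le_mul_of_nonneg_right ?_ hB0
        exact_mod_cast hW ℓ hℓ

end Bounds

/-- The gradients of two scalar-output tanh neural networks with the same
architecture of depth `L ≥ 1` and width `W`, with weights bounded by `R ≥ 1`, differ in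
Euclidean norm by at most `√d · L² R^(2L-2) W^(2L-2) ‖θ - θ̃‖_{ℓ∞}` on the unit `ℓ∞` ball. -/
theorem tanh_network_gradient_lipschitz_in_parameters (dims : ℕ → ℕ) (L : ℕ) (hL : 1 ≤ L)
    (hout : dims L = 1)
    (A A' : ∀ ℓ : ℕ, Matrix (Fin (dims (ℓ + 1))) (Fin (dims ℓ)) ℝ)
    (b b' : ∀ ℓ : ℕ, Fin (dims (ℓ + 1)) → ℝ)
    (W : ℕ) (hW : ∀ ℓ ≤ L, dims ℓ ≤ W)
    (R : ℝ) (hR : 1 ≤ R)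
    (hA : ∀ ℓ < L, ∀ i j, |A ℓ i j| ≤ R)
    (hb : ∀ ℓ < L, ∀ i, |b ℓ i| ≤ R)
    (hA' : ∀ ℓ < L, ∀ i j, |A' ℓ i j| ≤ R)
    (hb' : ∀ ℓ < L, ∀ i, |b' ℓ i| ≤ R)
    (ε : ℝ) (hε : 0 ≤ ε)
    (hdA : ∀ ℓ < L, ∀ i j, |A ℓ i j - A' ℓ i j| ≤ ε)
    (hdb : ∀ ℓ < L, ∀ i, |b ℓ i - b' ℓ i| ≤ ε)
    (x : Fin (dims 0) → ℝ) (hx : ∀ j, |x j| ≤ 1) (i : Fin (dims L)) :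
    Real.sqrt (∑ j : Fin (dims 0),
        (fderiv ℝ (fun y => nnRealize dims L A b y i) x (Pi.single j 1) -
          fderiv ℝ (fun y => nnRealize dims L A' b' y i) x (Pi.single j 1)) ^ 2) ≤
      Real.sqrt (dims 0) * (L : ℝ) ^ 2 * R ^ (2 * L - 2) * (W : ℝ) ^ (2 * L - 2) * ε := by
  have hW1n : 1 ≤ W := by have := hW L le_rfl; omega
  have hW1 : (1:ℝ) ≤ (W:ℝ) := by exact_mod_cast hW1n
  have hR0 : (0:ℝ) ≤ R := by linarith
  have hr1 : (1:ℝ) ≤ R * W := by nlinarith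
  have hr0 : (0:ℝ) ≤ R * W := by linarith
  obtain ⟨m, rfl⟩ : ∃ m, L = m + 1 := ⟨L - 1, by omega⟩
  have hmlt : m < m + 1 := Nat.lt_succ_self m
  have hder1 : ∀ j : Fin (dims 0),
      fderiv ℝ (fun y => nnRealize dims (m + 1) A b y i) x (Pi.single j 1)
        = ∑ k, A m i k * nnDer dims A b x m k (Pi.single j 1) := by
    intro j
    have h : HasFDerivAt (fun y => nnRealize dims (m + 1) A b y i)
        (∑ k, A m i k • nnDer dims A b x m k) x :=
      (HasFDerivAt.fun_sum fun k _ =>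
        (hasFDerivAt_nnHidden dims A b x m k).const_mul (A m i k)).add_const (b m i)
    rw [h.fderiv]
    simp [ContinuousLinearMap.sum_apply]
  have hder2 : ∀ j : Fin (dims 0),
      fderiv ℝ (fun y => nnRealize dims (m + 1) A' b' y i) x (Pi.single j 1)
        = ∑ k, A' m i k * nnDer dims A' b' x m k (Pi.single j 1) := by
    intro j
    have h : HasFDerivAt (fun y => nnRealize dims (m + 1) A' b' y i)
        (∑ k, A' m i k • nnDer dims A' b' x m k) x :=
      (HasFDerivAt.fun_sum fun k _ =>
        (hasFDerivAt_nnHidden dims A' b' x m k).const_mul (A' m i k)).add_const (b' m i)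
    rw [h.fderiv]
    simp [ContinuousLinearMap.sum_apply]
  set B := ((m : ℝ) + 1) ^ 2 * (R * W) ^ (2 * m) * ε with hBdef
  have hB0 : 0 ≤ B := mul_nonneg (by positivity) hε
  have key : ∀ j : Fin (dims 0),
      |(∑ k, A m i k * nnDer dims A b x m k (Pi.single j 1)) -
        (∑ k, A' m i k * nnDer dims A' b' x m k (Pi.single j 1))| ≤ B := by
    intro j
    set S3 := ∑ k, |nnDer dims A b x m k (Pi.single j 1) -
        nnDer dims A' b' x m k (Pi.single j 1)| with hS3def
    have hdiff : |(∑ k, A m i k * nnDer dims A b x m k (Pi.single j 1)) -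
        (∑ k, A' m i k * nnDer dims A' b' x m k (Pi.single j 1))| ≤
        ε * (R * W) ^ m + R * S3 :=
      diff_sumAg dims (m + 1) A A' b b' W R ε x hR hW hε hA hA' hdA j m hmlt i
    have hS3b := diff_der_sum dims (m + 1) A A' b b' W R ε x hR hW1 hW hε hx hA hA' hdA hdb
      j m hmlt.le
    have hc1 : ((W : ℝ) + 1) * R * ((m : ℝ) * ((m : ℝ) + 1) / 2) * ε * (R * W) ^ (2 * m + 1)
        ≤ (m : ℝ) * ((m : ℝ) + 1) * ε * (R * W) ^ (2 * m + 2) := by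
      have h2 : ((W : ℝ) + 1) * R ≤ 2 * (R * W) := by nlinarith
      calc ((W : ℝ) + 1) * R * ((m : ℝ) * ((m : ℝ) + 1) / 2) * ε * (R * W) ^ (2 * m + 1)
          ≤ (2 * (R * W)) * ((m : ℝ) * ((m : ℝ) + 1) / 2) * ε * (R * W) ^ (2 * m + 1) := by
            refine mul_le_mul_of_nonneg_right (mul_le_mul_of_nonneg_right
              (mul_le_mul_of_nonneg_right h2 (by positivity)) hε) (by positivity)
        _ = (m : ℝ) * ((m : ℝ) + 1) * ε * (R * W) ^ (2 * m + 2) := by ring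
    have hpow2 : (R * W) ^ (m + 2) ≤ (R * W) ^ (2 * m + 2) :=
      pow_le_pow_right₀ hr1 (by omega)
    have hc2 : ((m : ℝ) + 1) * ε * (R * W) ^ (m + 2)
        ≤ ((m : ℝ) + 1) * ε * (R * W) ^ (2 * m + 2) :=
      mul_le_mul_of_nonneg_left hpow2 (mul_nonneg (by positivity) hε)
    have hchain : (R * W) ^ 2 * |(∑ k, A m i k * nnDer dims A b x m k (Pi.single j 1)) -
        (∑ k, A' m i k * nnDer dims A' b' x m k (Pi.single j 1))| ≤ (R * W) ^ 2 * B := by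
      calc (R * W) ^ 2 * |(∑ k, A m i k * nnDer dims A b x m k (Pi.single j 1)) -
            (∑ k, A' m i k * nnDer dims A' b' x m k (Pi.single j 1))|
          ≤ (R * W) ^ 2 * (ε * (R * W) ^ m + R * S3) :=
            mul_le_mul_of_nonneg_left hdiff (by positivity)
        _ = ε * (R * W) ^ (m + 2) + R * ((R * W) ^ 2 * S3) := by ring
        _ ≤ ε * (R * W) ^ (m + 2) + R * ((W : ℝ) *
            ((((W : ℝ) + 1) * R * ((m : ℝ) * ((m : ℝ) + 1) / 2) * (R * W) ^ (2 * m)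
              + (m : ℝ) * (R * W) ^ (m + 1)) * ε)) :=
            add_le_add_right (mul_le_mul_of_nonneg_left hS3b hR0) _
        _ = ((m : ℝ) + 1) * ε * (R * W) ^ (m + 2)
            + ((W : ℝ) + 1) * R * ((m : ℝ) * ((m : ℝ) + 1) / 2) * ε * (R * W) ^ (2 * m + 1) := by
            ring
        _ ≤ ((m : ℝ) + 1) * ε * (R * W) ^ (2 * m + 2)
            + (m : ℝ) * ((m : ℝ) + 1) * ε * (R * W) ^ (2 * m + 2) := add_le_add hc2 hc1
        _ = (R * W) ^ 2 * B := by rw [hBdef]; ring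
    have hrr : (0:ℝ) < (R * W) ^ 2 := by positivity
    exact le_of_mul_le_mul_left hchain hrr
  have hsq : ∀ j : Fin (dims 0),
      (fderiv ℝ (fun y => nnRealize dims (m + 1) A b y i) x (Pi.single j 1) -
        fderiv ℝ (fun y => nnRealize dims (m + 1) A' b' y i) x (Pi.single j 1)) ^ 2 ≤ B ^ 2 := by
    intro j
    rw [hder1 j, hder2 j]
    have h := pow_le_pow_left₀ (abs_nonneg _) (key j) 2
    rwa [sq_abs] at h
  calc Real.sqrt (∑ j : Fin (dims 0),
        (fderiv ℝ (fun y => nnRealize dims (m + 1) A b y i) x (Pi.single j 1) -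
          fderiv ℝ (fun y => nnRealize dims (m + 1) A' b' y i) x (Pi.single j 1)) ^ 2)
      ≤ Real.sqrt (∑ _j : Fin (dims 0), B ^ 2) :=
        Real.sqrt_le_sqrt (Finset.sum_le_sum fun j _ => hsq j)
    _ = Real.sqrt ((dims 0 : ℝ) * B ^ 2) := by
        rw [Finset.sum_const, Finset.card_univ]; simp [Fintype.card_fin, nsmul_eq_mul]
    _ = Real.sqrt (dims 0) * B := by
        rw [Real.sqrt_mul (by positivity), Real.sqrt_sq hB0]
    _ = Real.sqrt (dims 0) * ((m + 1 : ℕ) : ℝ) ^ 2 * R ^ (2 * (m + 1) - 2)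
          * (W : ℝ) ^ (2 * (m + 1) - 2) * ε := by
        have h2m : 2 * (m + 1) - 2 = 2 * m := by omega
        rw [h2m, hBdef]
        push_cast
        rw [mul_pow]
        ring
end

section
/- Let μ be a probability measure on a measurable space D and let F be a nonempty countable class of measurable functions on D with M := sup_{f ∈ F} sup_{x ∈ D} |f(x)| < ∞. Suppose n ∈ ℕ with n^{−1/2} < M, and suppose there exist N ≥ 1 and B ≥ 1 such that log C(F, ‖·‖_∞, ε) ≤ N log(4B/ε) for all ε ∈ (0, M], where C(F, ‖·‖_∞, ε) is the ε-covering number of F in the supremum metric. Then the Rademacher complexity satisfies R_n(F) ≤ 4 n^{−1/2} + 12 n^{−1/2} M ( N log(4 B n^{1/2}) )^{1/2}. -/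
open MeasureTheory

/-- The Rademacher distribution on `ℝ`: `±1` with probability `1/2` each. -/
noncomputable def radMeasure : Measure ℝ :=
  (1 / 2 : ENNReal) • Measure.dirac (1 : ℝ) + (1 / 2 : ENNReal) • Measure.dirac (-1 : ℝ)

/-- The Rademacher complexity of a class `F` of functions on `D` with respect to the
distribution `μ` and sample size `n`:
`R_n(F) = E_{ξ,ω}[ sup_{v ∈ F} n⁻¹ |∑_{j} ω_j v(ξ_j)| ]`. -/
noncomputable def rademacherComplexity {D : Type*} [MeasurableSpace D]
    (μ : Measure D) (n : ℕ) (F : Set (D → ℝ)) : ℝ :=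
  ∫ p : (Fin n → D) × (Fin n → ℝ),
      ⨆ v ∈ F, (n : ℝ)⁻¹ * |∑ j, p.2 j * v (p.1 j)|
    ∂((Measure.pi fun _ : Fin n => μ).prod (Measure.pi fun _ : Fin n => radMeasure))

/-- The `ε`-covering number of a set `G` with respect to the metric `ρ`. -/
noncomputable def coveringNumber {X : Type*} (ρ : X → X → ℝ) (G : Set X) (ε : ℝ) : ℕ∞ :=
  ⨅ (T : Finset X) (_ : ↑T ⊆ G) (_ : ∀ x ∈ G, ∃ y ∈ T, ρ x y ≤ ε), (T.card : ℕ∞)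

/-- The supremum metric `‖u − v‖_∞ = sup_{x ∈ D} |u(x) − v(x)|` on functions `D → ℝ`. -/
noncomputable def supDist {D : Type*} (u v : D → ℝ) : ℝ := ⨆ x, |u x - v x|

set_option maxHeartbeats 1000000
set_option linter.unusedSectionVars false
set_option linter.unusedVariables false
set_option linter.deprecated false

noncomputable def netSum {D : Type*} {n : ℕ} (T : Finset (D → ℝ)) (t : ℝ)
    (p : (Fin n → D) × (Fin n → ℝ)) : ℝ :=
  ∑ u ∈ T, (Real.exp (t * ∑ j, p.2 j * u (p.1 j))
    + Real.exp (-(t * ∑ j, p.2 j * u (p.1 j))))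


lemma netSum_two_le {D : Type*} {n : ℕ} (T : Finset (D → ℝ)) (hTne : T.Nonempty) (t : ℝ)
    (p : (Fin n → D) × (Fin n → ℝ)) : 2 ≤ netSum T t p := by
  have h1 : ∀ u ∈ T, (2 : ℝ) ≤ Real.exp (t * ∑ j, p.2 j * u (p.1 j))
      + Real.exp (-(t * ∑ j, p.2 j * u (p.1 j))) := by
    intro u _
    have hc := Real.one_le_cosh (t * ∑ j, p.2 j * u (p.1 j))
    rw [Real.cosh_eq] at hc
    linarith
  have h2 := Finset.card_nsmul_le_sum T _ _ h1
  rw [nsmul_eq_mul] at h2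
  have : (1 : ℝ) ≤ T.card := by exact_mod_cast Finset.card_pos.2 hTne
  unfold netSum
  nlinarith

lemma abs_sum_le {D : Type*} {n : ℕ} (u : D → ℝ) (M : ℝ) (hu : ∀ x, |u x| ≤ M)
    (p : (Fin n → D) × (Fin n → ℝ)) (hp : ∀ j, p.2 j = 1 ∨ p.2 j = -1) :
    |∑ j, p.2 j * u (p.1 j)| ≤ n * M := by
  refine (Finset.abs_sum_le_sum_abs _ _).trans ?_
  have hterm : ∀ j ∈ Finset.univ, |p.2 j * u (p.1 j)| ≤ M := by
    intro j _
    have h1 : |p.2 j| = 1 := by rcases hp j with h | h <;> rw [h] <;> simp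
    rw [abs_mul, h1, one_mul]
    exact hu _
  refine (Finset.sum_le_sum hterm).trans ?_
  simp [Finset.sum_const, Finset.card_univ, nsmul_eq_mul]

lemma pointwise_net_bound {D : Type*} {n : ℕ} (hn : 0 < n) (F : Set (D → ℝ))
    (M : ℝ) (hM : ∀ v ∈ F, ∀ x, |v x| ≤ M)
    (ε : ℝ) (hε0 : 0 < ε) (T : Finset (D → ℝ)) (hTne : T.Nonempty)
    (hTsub : ↑T ⊆ F) (hTcov : ∀ v ∈ F, ∃ u ∈ T, supDist v u ≤ ε)
    (t : ℝ) (ht0 : 0 < t)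
    (p : (Fin n → D) × (Fin n → ℝ)) (hp : ∀ j, p.2 j = 1 ∨ p.2 j = -1) :
    (⨆ v ∈ F, (n : ℝ)⁻¹ * |∑ j, p.2 j * v (p.1 j)|)
      ≤ ε + ((n : ℝ) * t)⁻¹ * Real.log (netSum T t p) := by
  have hn0 : (0 : ℝ) < n := by exact_mod_cast hn
  have hn0' : (n : ℝ) ≠ 0 := hn0.ne'
  have hlogY0 : 0 ≤ Real.log (netSum T t p) :=
    Real.log_nonneg (by linarith [netSum_two_le T hTne t p])
  have hg0 : 0 ≤ ε + ((n : ℝ) * t)⁻¹ * Real.log (netSum T t p) :=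
    add_nonneg hε0.le (mul_nonneg (by positivity) hlogY0)
  refine Real.iSup_le (fun v => Real.iSup_le (fun hv => ?_) hg0) hg0
  obtain ⟨u, huT, hd⟩ := hTcov v hv
  have huF : u ∈ F := hTsub huT
  have hvu : ∀ x, |v x - u x| ≤ ε := by
    intro x
    have hds : supDist v u = ⨆ x, |v x - u x| := rfl
    rw [hds] at hd
    have hbdd : BddAbove (Set.range fun x => |v x - u x|) := by
      refine ⟨M + M, ?_⟩
      rintro y ⟨x', rfl⟩
      calc |v x' - u x'| ≤ |v x'| + |u x'| := abs_sub _ _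
        _ ≤ M + M := add_le_add (hM v hv x') (hM u huF x')
    exact le_trans (le_ciSup hbdd x) hd
  have h1 : |∑ j, p.2 j * v (p.1 j)| ≤ |∑ j, p.2 j * u (p.1 j)| + n * ε := by
    have hdiff : |∑ j, p.2 j * v (p.1 j) - ∑ j, p.2 j * u (p.1 j)| ≤ n * ε := by
      rw [← Finset.sum_sub_distrib]
      refine (Finset.abs_sum_le_sum_abs _ _).trans ?_
      have hterm : ∀ j ∈ Finset.univ,
          |p.2 j * v (p.1 j) - p.2 j * u (p.1 j)| ≤ ε := by
        intro j _
        rw [← mul_sub, abs_mul]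
        have h1' : |p.2 j| = 1 := by rcases hp j with h | h <;> rw [h] <;> simp
        rw [h1', one_mul]
        exact hvu _
      refine (Finset.sum_le_sum hterm).trans ?_
      simp [Finset.sum_const, Finset.card_univ, nsmul_eq_mul]
    have habs := abs_add_le (∑ j, p.2 j * u (p.1 j))
      ((∑ j, p.2 j * v (p.1 j)) - ∑ j, p.2 j * u (p.1 j))
    have heq : (∑ j, p.2 j * u (p.1 j))
        + ((∑ j, p.2 j * v (p.1 j)) - ∑ j, p.2 j * u (p.1 j))
        = ∑ j, p.2 j * v (p.1 j) := by ring
    rw [heq] at habs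
    linarith
  have h2 : |∑ j, p.2 j * u (p.1 j)| ≤ t⁻¹ * Real.log (netSum T t p) := by
    have hexp : Real.exp (t * |∑ j, p.2 j * u (p.1 j)|) ≤ netSum T t p := by
      have hle : Real.exp (t * |∑ j, p.2 j * u (p.1 j)|)
          ≤ Real.exp (t * ∑ j, p.2 j * u (p.1 j))
            + Real.exp (-(t * ∑ j, p.2 j * u (p.1 j))) := by
        rcases abs_cases (∑ j, p.2 j * u (p.1 j)) with ⟨h, _⟩ | ⟨h, _⟩
        · rw [h]; exact le_add_of_nonneg_right (Real.exp_pos _).le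
        · rw [h, mul_neg]; exact le_add_of_nonneg_left (Real.exp_pos _).le
      refine hle.trans ?_
      unfold netSum
      exact Finset.single_le_sum (f := fun w : D → ℝ =>
        Real.exp (t * ∑ j, p.2 j * w (p.1 j))
          + Real.exp (-(t * ∑ j, p.2 j * w (p.1 j))))
        (fun w _ => by positivity) huT
    have hlog : t * |∑ j, p.2 j * u (p.1 j)| ≤ Real.log (netSum T t p) := by
      have h' := Real.log_le_log (Real.exp_pos _) hexp
      rwa [Real.log_exp] at h'
    have h'' : |∑ j, p.2 j * u (p.1 j)| ≤ Real.log (netSum T t p) / t := by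
      rw [le_div_iff₀ ht0]
      linarith
    rwa [div_eq_inv_mul] at h''
  calc (n : ℝ)⁻¹ * |∑ j, p.2 j * v (p.1 j)|
      ≤ (n : ℝ)⁻¹ * (|∑ j, p.2 j * u (p.1 j)| + n * ε) :=
        mul_le_mul_of_nonneg_left h1 (by positivity)
    _ ≤ (n : ℝ)⁻¹ * (t⁻¹ * Real.log (netSum T t p) + n * ε) :=
        mul_le_mul_of_nonneg_left (by linarith) (by positivity)
    _ = ε + ((n : ℝ) * t)⁻¹ * Real.log (netSum T t p) := by
        rw [mul_inv]
        field_simp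
        ring


instance radMeasure_prob : IsProbabilityMeasure radMeasure := by
  constructor
  simp [radMeasure]
  rw [ENNReal.inv_two_add_inv_two]

lemma integrable_dirac'' (f : ℝ → ℝ) (a : ℝ) : Integrable f (Measure.dirac a) := by
  have h : f =ᵐ[Measure.dirac a] (fun _ => f a) := by
    rw [ae_dirac_eq]; exact Filter.eventually_pure.2 rfl
  exact (integrable_const (f a)).congr h.symm

lemma integral_radMeasure (f : ℝ → ℝ) : ∫ x, f x ∂radMeasure = (f 1 + f (-1)) / 2 := by
  rw [radMeasure, integral_add_measure
    ((integrable_smul_measure (by norm_num) (by norm_num)).2 (integrable_dirac'' f _))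
    ((integrable_smul_measure (by norm_num) (by norm_num)).2 (integrable_dirac'' f _)),
    integral_smul_measure, integral_smul_measure, integral_dirac, integral_dirac]
  norm_num
  ring

lemma radMeasure_mgf (c : ℝ) : ∫ x, Real.exp (x * c) ∂radMeasure ≤ Real.exp (c ^ 2 / 2) := by
  rw [integral_radMeasure]
  have h : (Real.exp (1 * c) + Real.exp (-1 * c)) / 2 = Real.cosh c := by
    rw [Real.cosh_eq]; ring_nf
  rw [h]
  exact Real.cosh_le_exp_half_sq c

lemma radMeasure_compl_pm : radMeasure ({1, -1} : Set ℝ)ᶜ = 0 := by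
  have hm : MeasurableSet (({1, -1} : Set ℝ)ᶜ) :=
    (by measurability : MeasurableSet ({1, -1} : Set ℝ)).compl
  simp [radMeasure, Measure.dirac_apply' _ hm]

lemma pi_integral_prod {n : ℕ} (ν : Measure ℝ) [SigmaFinite ν] (f : Fin n → ℝ → ℝ) :
    ∫ x : Fin n → ℝ, ∏ i, f i (x i) ∂(Measure.pi fun _ => ν) = ∏ i, ∫ x, f i x ∂ν := by
  letI : MeasureSpace ℝ := ⟨ν⟩
  haveI : SigmaFinite (volume : Measure ℝ) := ‹_›
  exact MeasureTheory.integral_fin_nat_prod_eq_prod f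

lemma rad_ae_pm (n : ℕ) :
    ∀ᵐ ω : Fin n → ℝ ∂(Measure.pi fun _ => radMeasure), ∀ j, ω j = 1 ∨ ω j = -1 := by
  rw [MeasureTheory.ae_all_iff]
  intro j
  rw [ae_iff]
  have h : {ω : Fin n → ℝ | ¬(ω j = 1 ∨ ω j = -1)} = Function.eval j ⁻¹' ({1, -1} : Set ℝ)ᶜ := by
    ext ω; simp [Function.eval]
  rw [h]
  exact MeasureTheory.Measure.pi_eval_preimage_null _ radMeasure_compl_pm

lemma exp_sum_integral (n : ℕ) (t Mb : ℝ) (a : Fin n → ℝ) (ha : ∀ j, |a j| ≤ Mb) :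
    ∫ ω : Fin n → ℝ, Real.exp (t * ∑ j, ω j * a j) ∂(Measure.pi fun _ => radMeasure)
      ≤ Real.exp (t ^ 2 * Mb ^ 2 * n / 2) := by
  have hrw : ∀ ω : Fin n → ℝ, Real.exp (t * ∑ j, ω j * a j)
      = ∏ j, Real.exp (ω j * (t * a j)) := by
    intro ω
    rw [← Real.exp_sum]
    congr 1
    rw [Finset.mul_sum]
    exact Finset.sum_congr rfl fun j _ => by ring
  simp_rw [hrw]
  rw [pi_integral_prod radMeasure (fun j x => Real.exp (x * (t * a j)))]
  calc ∏ j, ∫ x, Real.exp (x * (t * a j)) ∂radMeasure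
      ≤ ∏ _j : Fin n, Real.exp (t ^ 2 * Mb ^ 2 / 2) := by
        apply Finset.prod_le_prod
        · intro j _
          exact integral_nonneg fun x => (Real.exp_pos _).le
        · intro j _
          refine (radMeasure_mgf (t * a j)).trans ?_
          apply Real.exp_le_exp.2
          have h2 : (a j) ^ 2 ≤ Mb ^ 2 := by
            rw [← sq_abs]
            exact pow_le_pow_left₀ (abs_nonneg _) (ha j) 2
          rw [mul_pow]
          nlinarith [sq_nonneg t]
    _ = Real.exp (t ^ 2 * Mb ^ 2 * n / 2) := by
        rw [Finset.prod_const, ← Real.exp_nat_mul]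
        simp [Finset.card_univ]
        ring_nf

lemma integrable_of_ae_abs_bound {α : Type*} [MeasurableSpace α] {P : Measure α}
    [IsFiniteMeasure P] {h : α → ℝ} (hm : Measurable h) {C : ℝ}
    (hb : ∀ᵐ p ∂P, |h p| ≤ C) : Integrable h P :=
  Integrable.mono' (integrable_const C) hm.aestronglyMeasurable
    (by simpa [Real.norm_eq_abs] using hb)

lemma arith_step_s9 (n : ℕ) (hn : 0 < n) (M L2 : ℝ) (hM : 0 < M) (hL2 : 0 < L2) :
    ((n : ℝ) * Real.sqrt (2 * L2 / (n * M ^ 2)))⁻¹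
        * (L2 + (Real.sqrt (2 * L2 / (n * M ^ 2))) ^ 2 * M ^ 2 * n / 2)
      = M * Real.sqrt (2 * L2) / Real.sqrt n := by
  have hn0 : (0 : ℝ) < n := by exact_mod_cast hn
  have hq0 : 0 < Real.sqrt n := Real.sqrt_pos.2 hn0
  have hqn : Real.sqrt n ^ 2 = n := Real.sq_sqrt hn0.le
  have hA0 : 0 < Real.sqrt (2 * L2) := Real.sqrt_pos.2 (by linarith)
  have hA2 : Real.sqrt (2 * L2) ^ 2 = 2 * L2 := Real.sq_sqrt (by linarith)
  have ht : Real.sqrt (2 * L2 / (n * M ^ 2)) = Real.sqrt (2 * L2) / (Real.sqrt n * M) := by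
    rw [Real.sqrt_div (by linarith), Real.sqrt_mul hn0.le, Real.sqrt_sq hM.le]
  rw [ht]
  set q := Real.sqrt n
  set A := Real.sqrt (2 * L2)
  rw [show (n : ℝ) = q ^ 2 from hqn.symm]
  have hL2A : L2 = A ^ 2 / 2 := by linarith
  rw [hL2A]
  field_simp
  ring



section MeasurePart
variable {D : Type*} [MeasurableSpace D] (μ : Measure D) [IsProbabilityMeasure μ]
  (n : ℕ)

lemma haeP : ∀ᵐ p ∂((Measure.pi fun _ : Fin n => μ).prod (Measure.pi fun _ : Fin n => radMeasure)),
    ∀ j : Fin n, p.2 j = 1 ∨ p.2 j = -1 := by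
  rw [ae_iff]
  have h2 := rad_ae_pm n
  rw [ae_iff] at h2
  have hset : {p : (Fin n → D) × (Fin n → ℝ) | ¬ ∀ j, p.2 j = 1 ∨ p.2 j = -1}
      = Set.univ ×ˢ {ω : Fin n → ℝ | ¬ ∀ j, ω j = 1 ∨ ω j = -1} := by
    ext p; simp [Set.mem_prod]
  rw [hset, Measure.prod_prod, h2, mul_zero]

variable {F : Set (D → ℝ)} (hFm : ∀ v ∈ F, Measurable v)

lemma hSmeas {u : D → ℝ} (hu : Measurable u) :
    Measurable (fun p : (Fin n → D) × (Fin n → ℝ) => ∑ j, p.2 j * u (p.1 j)) := by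
  apply Finset.measurable_sum
  intro j _
  exact ((measurable_pi_apply j).comp measurable_snd).mul
    (hu.comp ((measurable_pi_apply j).comp measurable_fst))

lemma netSum_meas {T : Finset (D → ℝ)} (hT : ∀ u ∈ T, Measurable u) (t : ℝ) :
    Measurable (netSum T t (n := n)) := by
  apply Finset.measurable_sum
  intro u hu
  exact (((hSmeas n (hT u hu)).const_mul t).exp).add
    (((hSmeas n (hT u hu)).const_mul t).neg.exp)

lemma netSum_ub {T : Finset (D → ℝ)} (M t : ℝ) (ht0 : 0 ≤ t)
    (hT : ∀ u ∈ T, ∀ x, |u x| ≤ M)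
    (p : (Fin n → D) × (Fin n → ℝ)) (hp : ∀ j, p.2 j = 1 ∨ p.2 j = -1) :
    netSum T t p ≤ 2 * (T.card : ℝ) * Real.exp (t * (n * M)) := by
  have h1 : ∀ u ∈ T, Real.exp (t * ∑ j, p.2 j * u (p.1 j))
      + Real.exp (-(t * ∑ j, p.2 j * u (p.1 j))) ≤ 2 * Real.exp (t * (n * M)) := by
    intro u hu
    have hb := abs_sum_le u M (hT u hu) p hp
    have hsa := le_abs_self (∑ j, p.2 j * u (p.1 j))
    have hna := neg_abs_le (∑ j, p.2 j * u (p.1 j))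
    have habs := abs_nonneg (∑ j, p.2 j * u (p.1 j))
    have e1 : Real.exp (t * ∑ j, p.2 j * u (p.1 j)) ≤ Real.exp (t * (n * M)) := by
      apply Real.exp_le_exp.2; nlinarith
    have e2 : Real.exp (-(t * ∑ j, p.2 j * u (p.1 j))) ≤ Real.exp (t * (n * M)) := by
      apply Real.exp_le_exp.2; nlinarith
    linarith
  have h2 := Finset.sum_le_card_nsmul T _ _ h1
  rw [nsmul_eq_mul] at h2
  unfold netSum
  calc ∑ u ∈ T, (Real.exp (t * ∑ j, p.2 j * u (p.1 j))
        + Real.exp (-(t * ∑ j, p.2 j * u (p.1 j))))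
      ≤ (T.card : ℝ) * (2 * Real.exp (t * (n * M))) := h2
    _ = 2 * (T.card : ℝ) * Real.exp (t * (n * M)) := by ring

lemma exp_integrable (hn : 0 < n) {u : D → ℝ} (hu : Measurable u) {M : ℝ}
    (hub : ∀ x, |u x| ≤ M) (r : ℝ) :
    Integrable (fun p : (Fin n → D) × (Fin n → ℝ) =>
      Real.exp (r * ∑ j, p.2 j * u (p.1 j)))
      ((Measure.pi fun _ : Fin n => μ).prod (Measure.pi fun _ : Fin n => radMeasure)) := by
  apply integrable_of_ae_abs_bound ((hSmeas n hu).const_mul r).exp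
    (C := Real.exp (|r| * (n * M)))
  filter_upwards [haeP μ n] with p hp
  rw [abs_of_nonneg (Real.exp_pos _).le]
  apply Real.exp_le_exp.2
  calc r * ∑ j, p.2 j * u (p.1 j) ≤ |r * ∑ j, p.2 j * u (p.1 j)| := le_abs_self _
    _ = |r| * |∑ j, p.2 j * u (p.1 j)| := abs_mul _ _
    _ ≤ |r| * (n * M) := mul_le_mul_of_nonneg_left (abs_sum_le u M hub p hp) (abs_nonneg r)

lemma exp_integral_le (hn : 0 < n) {u : D → ℝ} (hu : Measurable u) {M : ℝ}
    (hub : ∀ x, |u x| ≤ M) (r : ℝ) :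
    ∫ p, Real.exp (r * ∑ j, p.2 j * u (p.1 j))
        ∂((Measure.pi fun _ : Fin n => μ).prod (Measure.pi fun _ : Fin n => radMeasure))
      ≤ Real.exp (r ^ 2 * M ^ 2 * n / 2) := by
  rw [MeasureTheory.integral_prod _ (exp_integrable μ n hn hu hub r)]
  refine le_trans (integral_mono_of_nonneg
    (Filter.Eventually.of_forall fun ξ => integral_nonneg fun ω => (Real.exp_pos _).le)
    (integrable_const (Real.exp (r ^ 2 * M ^ 2 * n / 2)))
    (Filter.Eventually.of_forall fun ξ =>
      exp_sum_integral n r M (fun j => u (ξ j)) (fun j => hub _))) ?_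
  simp

end MeasurePart


lemma rad_net_bound {D : Type*} [MeasurableSpace D] (μ : Measure D) [IsProbabilityMeasure μ]
    (n : ℕ) (hn : 0 < n) (F : Set (D → ℝ)) (hFm : ∀ v ∈ F, Measurable v)
    (M : ℝ) (hM0 : 0 < M) (hM : ∀ v ∈ F, ∀ x, |v x| ≤ M)
    (ε : ℝ) (hε0 : 0 < ε) (T : Finset (D → ℝ)) (hTne : T.Nonempty)
    (hTsub : ↑T ⊆ F) (hTcov : ∀ v ∈ F, ∃ u ∈ T, supDist v u ≤ ε) :
    rademacherComplexity μ n F ≤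
      ε + M * Real.sqrt (2 * Real.log (2 * T.card)) / Real.sqrt n := by
  classical
  have hn0 : (0 : ℝ) < n := by exact_mod_cast hn
  have hm1R : (1 : ℝ) ≤ (T.card : ℝ) := by exact_mod_cast Finset.card_pos.2 hTne
  set L2 := Real.log (2 * (T.card : ℝ)) with hL2_def
  have hL2 : 0 < L2 := Real.log_pos (by linarith)
  set t := Real.sqrt (2 * L2 / (n * M ^ 2)) with ht_def
  have ht0 : 0 < t := Real.sqrt_pos.2 (by positivity)
  set P := ((Measure.pi fun _ : Fin n => μ).prod (Measure.pi fun _ : Fin n => radMeasure))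
    with hP_def
  haveI : IsProbabilityMeasure P := by rw [hP_def]; infer_instance
  have hR : rademacherComplexity μ n F
      = ∫ p, (⨆ v ∈ F, (n : ℝ)⁻¹ * |∑ j, p.2 j * v (p.1 j)|) ∂P := rfl
  have hTmeas : ∀ u ∈ T, Measurable u := fun u hu => hFm u (hTsub hu)
  have hTub : ∀ u ∈ T, ∀ x, |u x| ≤ M := fun u hu => hM u (hTsub hu)
  have hYmeas : Measurable (netSum T t (n := n)) := netSum_meas n hTmeas t
  have hae := haeP μ n
  rw [← hP_def] at hae
  -- integrability of log ∘ netSum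
  have hlogYint : Integrable (fun p => Real.log (netSum T t p)) P := by
    apply integrable_of_ae_abs_bound hYmeas.log
      (C := Real.log (2 * (T.card : ℝ) * Real.exp (t * (n * M))))
    filter_upwards [hae] with p hp
    have h1 : 0 ≤ Real.log (netSum T t p) :=
      Real.log_nonneg (by linarith [netSum_two_le T hTne t p])
    rw [abs_of_nonneg h1]
    exact Real.log_le_log (by linarith [netSum_two_le T hTne t p])
      (netSum_ub n M t ht0.le hTub p hp)
  have hYint : Integrable (netSum T t (n := n)) P := by
    apply integrable_of_ae_abs_bound hYmeas
      (C := 2 * (T.card : ℝ) * Real.exp (t * (n * M)))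
    filter_upwards [hae] with p hp
    rw [abs_of_nonneg (by linarith [netSum_two_le T hTne t p])]
    exact netSum_ub n M t ht0.le hTub p hp
  have hgint : Integrable (fun p => ε + ((n : ℝ) * t)⁻¹ * Real.log (netSum T t p)) P :=
    (integrable_const ε).add (hlogYint.const_mul _)
  have hstep1 : rademacherComplexity μ n F
      ≤ ∫ p, (ε + ((n : ℝ) * t)⁻¹ * Real.log (netSum T t p)) ∂P := by
    rw [hR]
    refine integral_mono_of_nonneg ?_ hgint ?_
    · refine Filter.Eventually.of_forall fun p => ?_
      exact Real.iSup_nonneg fun v => Real.iSup_nonneg fun _ => by positivity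
    · filter_upwards [hae] with p hp
      exact pointwise_net_bound hn F M hM ε hε0 T hTne hTsub hTcov t ht0 p hp
  have hstep2 : ∫ p, (ε + ((n : ℝ) * t)⁻¹ * Real.log (netSum T t p)) ∂P
      = ε + ((n : ℝ) * t)⁻¹ * ∫ p, Real.log (netSum T t p) ∂P := by
    rw [integral_add (integrable_const ε) (hlogYint.const_mul _), integral_const,
      MeasureTheory.integral_const_mul]
    simp
  -- bound on ∫ netSum
  have hIeq : ∫ p, netSum T t p ∂P
      = ∑ u ∈ T, ((∫ p, Real.exp (t * ∑ j, p.2 j * u (p.1 j)) ∂P)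
        + ∫ p, Real.exp (-(t * ∑ j, p.2 j * u (p.1 j))) ∂P) := by
    have hint : ∀ u ∈ T, Integrable (fun p : (Fin n → D) × (Fin n → ℝ) =>
        Real.exp (t * ∑ j, p.2 j * u (p.1 j))
          + Real.exp (-(t * ∑ j, p.2 j * u (p.1 j)))) P := by
      intro u hu
      have hneg := exp_integrable μ n hn (hTmeas u hu) (hTub u hu) (-t)
      rw [← hP_def] at hneg
      simp only [neg_mul] at hneg
      have hpos := exp_integrable μ n hn (hTmeas u hu) (hTub u hu) t
      rw [← hP_def] at hpos
      exact hpos.add hneg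
    rw [show (netSum T t (n := n)) = fun p => ∑ u ∈ T,
      (Real.exp (t * ∑ j, p.2 j * u (p.1 j))
        + Real.exp (-(t * ∑ j, p.2 j * u (p.1 j)))) from rfl]
    rw [integral_finset_sum T hint]
    refine Finset.sum_congr rfl fun u hu => ?_
    have hneg := exp_integrable μ n hn (hTmeas u hu) (hTub u hu) (-t)
    rw [← hP_def] at hneg
    simp only [neg_mul] at hneg
    have hpos := exp_integrable μ n hn (hTmeas u hu) (hTub u hu) t
    rw [← hP_def] at hpos
    exact integral_add hpos hneg
  have hIle : ∫ p, netSum T t p ∂P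
      ≤ 2 * (T.card : ℝ) * Real.exp (t ^ 2 * M ^ 2 * n / 2) := by
    rw [hIeq]
    have hterm : ∀ u ∈ T,
        (∫ p, Real.exp (t * ∑ j, p.2 j * u (p.1 j)) ∂P)
          + (∫ p, Real.exp (-(t * ∑ j, p.2 j * u (p.1 j))) ∂P)
        ≤ 2 * Real.exp (t ^ 2 * M ^ 2 * n / 2) := by
      intro u hu
      have ha := exp_integral_le μ n hn (hTmeas u hu) (hTub u hu) t
      rw [← hP_def] at ha
      have hb := exp_integral_le μ n hn (hTmeas u hu) (hTub u hu) (-t)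
      rw [← hP_def] at hb
      simp only [neg_mul, neg_sq] at hb
      linarith
    have h2 := Finset.sum_le_card_nsmul T _ _ hterm
    rw [nsmul_eq_mul] at h2
    calc _ ≤ (T.card : ℝ) * (2 * Real.exp (t ^ 2 * M ^ 2 * n / 2)) := h2
      _ = 2 * (T.card : ℝ) * Real.exp (t ^ 2 * M ^ 2 * n / 2) := by ring
  have hI2 : (2 : ℝ) ≤ ∫ p, netSum T t p ∂P := by
    have h := integral_mono (integrable_const (2 : ℝ)) hYint (netSum_two_le T hTne t)
    simpa using h
  have hI0 : (0 : ℝ) < ∫ p, netSum T t p ∂P := by linarith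
  have hlogI : ∫ p, Real.log (netSum T t p) ∂P ≤ Real.log (∫ p, netSum T t p ∂P) := by
    set I := ∫ p, netSum T t p ∂P with hI_def
    have hpt : ∀ p : (Fin n → D) × (Fin n → ℝ), Real.log (netSum T t p) ≤ netSum T t p / I + (Real.log I - 1) := by
      intro p
      have hY0 : (0 : ℝ) < netSum T t p := by linarith [netSum_two_le T hTne t p]
      have h := Real.log_le_sub_one_of_pos (div_pos hY0 hI0)
      rw [Real.log_div hY0.ne' hI0.ne'] at h
      linarith
    have hint2 : Integrable (fun p => netSum T t p / I + (Real.log I - 1)) P :=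
      (hYint.div_const I).add (integrable_const _)
    refine le_trans (integral_mono_of_nonneg
      (Filter.Eventually.of_forall fun p =>
        Real.log_nonneg (by linarith [netSum_two_le T hTne t p]))
      hint2 (Filter.Eventually.of_forall hpt)) ?_
    rw [integral_add (hYint.div_const I) (integrable_const _), integral_div, integral_const]
    simp only [measure_univ, probReal_univ, ENNReal.toReal_one, smul_eq_mul, one_mul]
    rw [← hI_def, div_self hI0.ne']
    linarith
  have hfinal : rademacherComplexity μ n F
      ≤ ε + ((n : ℝ) * t)⁻¹ * (L2 + t ^ 2 * M ^ 2 * n / 2) := by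
    refine hstep1.trans ?_
    rw [hstep2]
    have h3 : ∫ p, Real.log (netSum T t p) ∂P ≤ L2 + t ^ 2 * M ^ 2 * n / 2 := by
      refine hlogI.trans ?_
      refine (Real.log_le_log hI0 hIle).trans ?_
      rw [Real.log_mul (by positivity) (Real.exp_pos _).ne', Real.log_exp]
    have h4 : (0 : ℝ) ≤ ((n : ℝ) * t)⁻¹ := by positivity
    nlinarith [mul_le_mul_of_nonneg_left h3 h4]
  refine hfinal.trans ?_
  rw [ht_def, arith_step_s9 n hn M L2 hM0 hL2]


/-- For a nonempty countable class `F` of measurable functions uniformly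
bounded by `M`, if `n^{-1/2} < M` and the covering numbers satisfy
`log C(F, ‖·‖_∞, ε) ≤ N log(4B/ε)` for all `ε ∈ (0, M]` with `N, B ≥ 1`, then
`R_n(F) ≤ 4 n^{-1/2} + 12 n^{-1/2} M √(N log(4 B √n))`. -/
theorem rademacher_bound_from_covering {D : Type*} [MeasurableSpace D]
    (μ : Measure D) [IsProbabilityMeasure μ] (n : ℕ) (hn : 0 < n)
    (F : Set (D → ℝ)) (hFne : F.Nonempty) (hFc : F.Countable)
    (hFm : ∀ v ∈ F, Measurable v)
    (M : ℝ) (hM : ∀ v ∈ F, ∀ x, |v x| ≤ M)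
    (hnM : 1 / Real.sqrt n < M)
    (N B : ℝ) (hN : 1 ≤ N) (hB : 1 ≤ B)
    (hcov : ∀ ε : ℝ, 0 < ε → ε ≤ M →
      coveringNumber (supDist (D := D)) F ε ≠ ⊤ ∧
      Real.log ((coveringNumber (supDist (D := D)) F ε).toNat) ≤ N * Real.log (4 * B / ε)) :
    rademacherComplexity μ n F ≤
      4 / Real.sqrt n +
        12 / Real.sqrt n * M * Real.sqrt (N * Real.log (4 * B * Real.sqrt n)) := by
  classical
  have hn0 : (0 : ℝ) < n := by exact_mod_cast hn
  have hs1 : (1 : ℝ) ≤ Real.sqrt n := by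
    rw [show (1 : ℝ) = Real.sqrt 1 by simp]
    exact Real.sqrt_le_sqrt (by exact_mod_cast hn)
  have hs0 : (0 : ℝ) < Real.sqrt n := lt_of_lt_of_le one_pos hs1
  have hM0 : 0 < M := lt_trans (by positivity) hnM
  set ε := 1 / Real.sqrt n with hε_def
  have hε0 : 0 < ε := by positivity
  have hεM : ε ≤ M := hnM.le
  obtain ⟨hfin, hlog⟩ := hcov ε hε0 hεM
  set c := (coveringNumber (supDist (D := D)) F ε).toNat with hc_def
  have hc : (c : ℕ∞) = coveringNumber (supDist (D := D)) F ε := ENat.coe_toNat hfin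
  have hlt : coveringNumber (supDist (D := D)) F ε < (c : ℕ∞) + 1 := by
    rw [← hc]
    exact_mod_cast Nat.lt_succ_self c
  rw [coveringNumber] at hlt
  simp only [iInf_lt_iff] at hlt
  obtain ⟨T, hTsub, hTcov, hTcard⟩ := hlt
  have hTcard' : T.card ≤ c := by exact_mod_cast Nat.lt_succ_iff.mp (by exact_mod_cast hTcard)
  have hTne : T.Nonempty := by
    obtain ⟨v₀, hv₀⟩ := hFne
    obtain ⟨u, huT, -⟩ := hTcov v₀ hv₀
    exact ⟨u, huT⟩
  have hm1 : 1 ≤ T.card := Finset.card_pos.2 hTne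
  have hm1R : (1 : ℝ) ≤ (T.card : ℝ) := by exact_mod_cast hm1
  -- covering log bound
  have hεrw : 4 * B / ε = 4 * B * Real.sqrt n := by
    rw [hε_def]
    field_simp
  set L := Real.log (4 * B * Real.sqrt n) with hL_def
  have hL4 : Real.log 4 ≤ L := by
    apply Real.log_le_log (by norm_num)
    nlinarith
  have hlog4 : (1 : ℝ) < Real.log 4 := by
    rw [show (1:ℝ) = Real.log (Real.exp 1) by rw [Real.log_exp]]
    apply Real.log_lt_log (Real.exp_pos 1)
    calc Real.exp 1 < 2.7182818286 := Real.exp_one_lt_d9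
      _ < 4 := by norm_num
  have hL0 : 0 < L := by linarith
  set K := N * L with hK_def
  have hKL : L ≤ K := le_mul_of_one_le_left hL0.le hN
  have hK0 : 0 < K := lt_of_lt_of_le hL0 hKL
  have hlogm : Real.log (T.card : ℝ) ≤ K := by
    have h1 : Real.log (T.card : ℝ) ≤ Real.log (c : ℝ) := by
      rcases eq_or_lt_of_le hm1R with h | h
      · rw [← h]
        simp only [Real.log_one]
        apply Real.log_nonneg
        have : (1:ℝ) ≤ (T.card : ℝ) := hm1R
        have : (T.card : ℝ) ≤ (c : ℝ) := by exact_mod_cast hTcard'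
        linarith
      · exact Real.log_le_log (by linarith) (by exact_mod_cast hTcard')
    refine h1.trans ?_
    rw [hK_def, hL_def, ← hεrw]
    exact hlog
  -- apply the net bound
  have hmain := rad_net_bound μ n hn F hFm M hM0 hM ε hε0 T hTne hTsub hTcov
  refine hmain.trans ?_
  -- numeric comparison
  have h2L2 : 2 * Real.log (2 * (T.card : ℝ)) ≤ 144 * K := by
    rw [Real.log_mul (by norm_num) (by linarith)]
    have hlog2 : 2 * Real.log 2 = Real.log 4 := by
      rw [show (4 : ℝ) = 2 ^ 2 by norm_num, Real.log_pow]
      push_cast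
      ring
    nlinarith
  have hsqrt : Real.sqrt (2 * Real.log (2 * (T.card : ℝ))) ≤ 12 * Real.sqrt K := by
    have h144 : Real.sqrt (144 * K) = 12 * Real.sqrt K := by
      have h' : (144 : ℝ) * K = (12 * Real.sqrt K) ^ 2 := by
        rw [mul_pow, Real.sq_sqrt hK0.le]; ring
      rw [h', Real.sqrt_sq (by positivity)]
    rw [← h144]
    exact Real.sqrt_le_sqrt h2L2
  have hε4 : ε ≤ 4 / Real.sqrt n := by
    rw [hε_def]
    rw [div_le_div_iff₀ hs0 hs0]
    nlinarith
  have hterm2 : M * Real.sqrt (2 * Real.log (2 * (T.card : ℝ))) / Real.sqrt n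
      ≤ 12 / Real.sqrt n * M * Real.sqrt K := by
    have h := mul_le_mul_of_nonneg_left hsqrt hM0.le
    calc M * Real.sqrt (2 * Real.log (2 * (T.card : ℝ))) / Real.sqrt n
        ≤ M * (12 * Real.sqrt K) / Real.sqrt n := (div_le_div_iff_of_pos_right hs0).2 h
      _ = 12 / Real.sqrt n * M * Real.sqrt K := by ring
  calc ε + M * Real.sqrt (2 * Real.log (2 * (T.card : ℝ))) / Real.sqrt n
      ≤ 4 / Real.sqrt n + 12 / Real.sqrt n * M * Real.sqrt K := add_le_add hε4 hterm2
    _ = _ := by rw [hK_def, hL_def]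
end
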